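/- Let G be a connected claw-free cubic graph with at least one bridge, and let G_i be the induced subgraph of G on a connected component of the graph obtained from G by deleting all bridges of G. Suppose G_i is 2-edge-connected, has maximum degree 3, and has at least 5 vertices. Then G_i admits a (1,1,1,3)-packing edge-coloring. -/

import Mathlib

open SimpleGraph

/-- For a sequence of levels `s : Fin k → ℕ`, an `S`-packing edge-coloring assigns to each
edge a color in `Fin k` so that any two distinct edges of the same color `i` are at
distance at least `s i + 1` in the line graph, i.e., every walk between them in the line
graph has length greater than `s i`. -/
def SimpleGraph.IsPackingEdgeColoring {V : Type*} (G : SimpleGraph V) {k : ℕ}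
    (s : Fin k → ℕ) (c : G.edgeSet → Fin k) : Prop :=
  ∀ e f : G.edgeSet, e ≠ f → c e = c f →
    ∀ p : G.lineGraph.Walk e f, s (c e) < p.length

/-- A graph is cubic if every vertex has degree 3. -/
def SimpleGraph.IsCubic {V : Type*} (G : SimpleGraph V) : Prop :=
  ∀ v : V, (G.neighborSet v).ncard = 3

/-- A graph is claw-free if it has no induced `K_{1,3}`. -/
def SimpleGraph.ClawFree {V : Type*} (G : SimpleGraph V) : Prop :=
  ¬ ∃ v a b c : V, G.Adj v a ∧ G.Adj v b ∧ G.Adj v c ∧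
      a ≠ b ∧ a ≠ c ∧ b ≠ c ∧ ¬ G.Adj a b ∧ ¬ G.Adj a c ∧ ¬ G.Adj b c

/-- A graph is 2-edge-connected if it is connected, has at least two vertices,
and has no bridge. -/
def SimpleGraph.TwoEdgeConnected {V : Type*} (G : SimpleGraph V) : Prop :=
  G.Connected ∧ Nontrivial V ∧ ∀ e : Sym2 V, ¬ G.IsBridge e


namespace PK

/-- Greedy 3-coloring lemma: a (finite) conflict relation in which "late" elements have
at most 2 neighbours and "early" elements have at most 2 early neighbours is 3-colorable. -/
lemma greedy_three {α : Type*} [Fintype α] (R : α → α → Prop)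
    (hsym : ∀ a b, R a b → R b a) (hirr : ∀ a, ¬ R a a) (L : α → Prop)
    (h1 : ∀ a, L a → {b | R a b}.ncard ≤ 2)
    (h2 : ∀ a, ¬ L a → {b | R a b ∧ ¬ L b}.ncard ≤ 2) :
    ∃ c : α → Fin 3, ∀ a b, R a b → c a ≠ c b := by
  classical
  suffices h : ∀ n : ℕ, ∀ s : Finset α, s.card = n →
      ∃ c : α → Fin 3, ∀ a ∈ s, ∀ b ∈ s, R a b → c a ≠ c b by
    obtain ⟨c, hc⟩ := h _ Finset.univ rfl
    exact ⟨c, fun a b hab => hc a (Finset.mem_univ a) b (Finset.mem_univ b) hab⟩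
  intro n
  induction n with
  | zero =>
    intro s hs
    rw [Finset.card_eq_zero] at hs
    subst hs
    exact ⟨fun _ => 0, by simp⟩
  | succ n ih =>
    intro s hs
    -- pick the element to color last
    have hsne : s.Nonempty := by
      rw [← Finset.card_pos, hs]; omega
    have hx : ∃ x ∈ s, (∃ a ∈ s, L a) → L x := by
      by_cases hl : ∃ a ∈ s, L a
      · obtain ⟨a, ha, hla⟩ := hl
        exact ⟨a, ha, fun _ => hla⟩
      · obtain ⟨x, hxs⟩ := hsne
        exact ⟨x, hxs, fun h => absurd h hl⟩
    obtain ⟨x, hxs, hxL⟩ := hx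
    obtain ⟨c, hc⟩ := ih (s.erase x) (by rw [Finset.card_erase_of_mem hxs, hs]; omega)
    -- the set of colors of earlier neighbours of x has size ≤ 2
    have hbound : {b | b ∈ s.erase x ∧ R x b}.ncard ≤ 2 := by
      by_cases hLx : L x
      · refine le_trans (Set.ncard_le_ncard ?_ (Set.toFinite _)) (h1 x hLx)
        intro b hb; exact hb.2
      · have hnl : ¬ ∃ a ∈ s, L a := fun h => hLx (hxL h)
        refine le_trans (Set.ncard_le_ncard ?_ (Set.toFinite _)) (h2 x hLx)
        intro b hb
        refine ⟨hb.2, fun hLb => hnl ⟨b, Finset.mem_of_mem_erase hb.1, hLb⟩⟩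
    have himg : ((fun b => c b) '' {b | b ∈ s.erase x ∧ R x b}).ncard ≤ 2 :=
      le_trans (Set.ncard_image_le (Set.toFinite _)) hbound
    have hk : ∃ k : Fin 3, k ∉ (fun b => c b) '' {b | b ∈ s.erase x ∧ R x b} := by
      by_contra hcon
      push_neg at hcon
      have : (Set.univ : Set (Fin 3)) ⊆ (fun b => c b) '' {b | b ∈ s.erase x ∧ R x b} :=
        fun k _ => hcon k
      have h3 : (3 : ℕ) ≤ 2 := by
        calc (3:ℕ) = (Set.univ : Set (Fin 3)).ncard := by simp [Set.ncard_univ]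
        _ ≤ _ := Set.ncard_le_ncard this (Set.toFinite _)
        _ ≤ 2 := himg
      omega
    obtain ⟨k, hk⟩ := hk
    refine ⟨Function.update c x k, ?_⟩
    intro a ha b hb hab
    by_cases hax : a = x
    · subst hax
      by_cases hbx : b = a
      · subst hbx; exact absurd hab (hirr b)
      · rw [Function.update_self, Function.update_of_ne hbx]
        intro hck
        exact hk ⟨b, ⟨Finset.mem_erase.2 ⟨hbx, hb⟩, hab⟩, hck.symm⟩
    · rw [Function.update_of_ne hax]
      by_cases hbx : b = x
      · subst hbx
        rw [Function.update_self]
        intro hck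
        exact hk ⟨a, ⟨Finset.mem_erase.2 ⟨hax, ha⟩, hsym _ _ hab⟩, hck⟩
      · rw [Function.update_of_ne hbx]
        exact hc a (Finset.mem_erase.2 ⟨hax, ha⟩) b (Finset.mem_erase.2 ⟨hbx, hb⟩) hab

/-- Existence of a maximal independent set (with respect to a property `P` and
a relation `R`) in a finite type. -/
lemma exists_maximal_indep {α : Type*} [Finite α] (P : α → Prop) (R : α → α → Prop) :
    ∃ I : Set α, (∀ a ∈ I, P a) ∧ (∀ a ∈ I, ∀ b ∈ I, a ≠ b → ¬ R a b) ∧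
      (∀ a, P a → a ∉ I → ∃ b ∈ I, R a b ∨ R b a) := by
  classical
  cases nonempty_fintype α
  let ok : Finset α → Prop := fun J =>
    (∀ a ∈ J, P a) ∧ (∀ a ∈ J, ∀ b ∈ J, a ≠ b → ¬ R a b)
  have hne : (Finset.univ.powerset.filter ok).Nonempty := by
    refine ⟨∅, ?_⟩
    simp [ok]
  obtain ⟨J, hJmem, hJmax⟩ :=
    Finset.exists_max_image (Finset.univ.powerset.filter ok) Finset.card hne
  rw [Finset.mem_filter] at hJmem
  refine ⟨(J : Set α), fun a ha => hJmem.2.1 a ha, fun a ha b hb => hJmem.2.2 a ha b hb, ?_⟩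
  intro a hPa haJ
  by_contra hcon
  push_neg at hcon
  have hok : ok (insert a J) := by
    constructor
    · intro x hx
      rcases Finset.mem_insert.1 hx with rfl | hx
      · exact hPa
      · exact hJmem.2.1 x hx
    · intro x hx y hy hxy
      rcases Finset.mem_insert.1 hx with hxa | hx2
      · rcases Finset.mem_insert.1 hy with hya | hy2
        · exact absurd (hxa.trans hya.symm) hxy
        · subst hxa; intro hR; exact (hcon y (Finset.mem_coe.2 hy2)).1 hR
      · rcases Finset.mem_insert.1 hy with hya | hy2
        · subst hya; intro hR; exact (hcon x (Finset.mem_coe.2 hx2)).2 hR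
        · exact hJmem.2.2 x hx2 y hy2 hxy
  have hmem : insert a J ∈ Finset.univ.powerset.filter ok := by
    rw [Finset.mem_filter]
    exact ⟨Finset.mem_powerset.2 (Finset.subset_univ _), hok⟩
  have := hJmax _ hmem
  rw [Finset.card_insert_of_notMem (by simpa using haJ)] at this
  omega

end PK
set_option linter.unusedSectionVars false

section PKdefs

namespace PK

variable {W : Type*} [Fintype W] (H : SimpleGraph W)

open scoped Classical

/-- An edge (given by its endpoints) lying in a triangle. -/
def triE (u w : W) : Prop := H.Adj u w ∧ ∃ x, H.Adj u x ∧ H.Adj w x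

/-- The "unit" of a vertex: the set of vertices reachable through triangle edges. -/
def unitOf (v : W) : Set W := {w | Relation.ReflTransGen (triE H) v w}

/-- A diamond with ends `a, d` and centers `b, c`. -/
def Dia (a b c d : W) : Prop :=
  H.Adj b c ∧ H.Adj a b ∧ H.Adj a c ∧ H.Adj d b ∧ H.Adj d c ∧ a ≠ d

def InDia (v : W) : Prop := ∃ a b c d, Dia H a b c d ∧ (v = a ∨ v = b ∨ v = c ∨ v = d)

def TriUnit (s : Set W) : Prop := ∃ v, ¬ InDia H v ∧ s = unitOf H v

def DiaUnit (s : Set W) : Prop := ∃ v, InDia H v ∧ s = unitOf H v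

def IsExt (e : H.edgeSet) : Prop := ∃ u v : W, (e : Sym2 W) = s(u, v) ∧ v ∉ unitOf H u

def hasExt (v : W) : Prop := ∃ w, H.Adj v w ∧ w ∉ unitOf H v

noncomputable def extEdge (v : W) (h : hasExt H v) : H.edgeSet :=
  ⟨s(v, h.choose), h.choose_spec.1⟩

noncomputable def extC (φ : H.edgeSet → Fin 3) (v : W) : Fin 3 :=
  if h : hasExt H v then φ (extEdge H v h) else 0

def BothIn (e : H.edgeSet) (s : Set W) : Prop := ∀ x ∈ (e : Sym2 W), x ∈ s

def UAdj (s t : Set W) : Prop := s ≠ t ∧ ∃ u ∈ s, ∃ w ∈ t, H.Adj u w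

def Strict (I : Set (Set W)) (s : Set W) : Prop := TriUnit H s ∧ s ∉ I

def confl (I : Set (Set W)) (e f : H.edgeSet) : Prop :=
  e ≠ f ∧ IsExt H e ∧ IsExt H f ∧
    ∃ s : Set W, Strict H I s ∧ (∃ x ∈ (e : Sym2 W), x ∈ s) ∧ (∃ y ∈ (f : Sym2 W), y ∈ s)

def Late (I : Set (Set W)) (e : H.edgeSet) : Prop :=
  ¬ IsExt H e ∨ ∃ x ∈ (e : Sym2 W), (InDia H x ∨ unitOf H x ∈ I)

/-- Specification for the local coloring of a unit `s`. -/
def Spec (I : Set (Set W)) (φ : H.edgeSet → Fin 3) (s : Set W) (g : H.edgeSet → Fin 4) :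
    Prop :=
  (∀ x ∈ s, ∀ e1 e2 : H.edgeSet, x ∈ (e1 : Sym2 W) → x ∈ (e2 : Sym2 W) →
      BothIn H e1 s → BothIn H e2 s → e1 ≠ e2 → g e1 ≠ g e2) ∧
  (∀ e1 e2 : H.edgeSet, BothIn H e1 s → BothIn H e2 s → g e1 = 3 → g e2 = 3 → e1 = e2) ∧
  (∀ x ∈ s, ∀ e1 : H.edgeSet, x ∈ (e1 : Sym2 W) → BothIn H e1 s → hasExt H x →
      g e1 ≠ (extC H φ x).castSucc) ∧
  (DiaUnit H s → ∀ e : H.edgeSet, BothIn H e s → g e = 3 →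
      ∀ x ∈ (e : Sym2 W), ∀ w, H.Adj x w → w ∈ s) ∧
  (TriUnit H s → s ∉ I → ∀ e : H.edgeSet, BothIn H e s → g e ≠ 3)

variable {H}

lemma triE_symm {u w : W} (h : triE H u w) : triE H w u := by
  obtain ⟨h1, x, h2, h3⟩ := h
  exact ⟨h1.symm, x, h3, h2⟩

lemma mem_unitOf_self (v : W) : v ∈ unitOf H v := Relation.ReflTransGen.refl

lemma triE_mem_unit {v w : W} (h : triE H v w) : w ∈ unitOf H v :=
  Relation.ReflTransGen.single h

lemma unit_symm {v w : W} (h : w ∈ unitOf H v) : v ∈ unitOf H w :=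
  (@Relation.ReflTransGen.stdSymm _ _ ⟨fun _ _ h => triE_symm h⟩).symm _ _ h

lemma unit_eq_of_mem {v w : W} (h : w ∈ unitOf H v) : unitOf H w = unitOf H v := by
  ext x
  constructor
  · intro hx
    exact Relation.ReflTransGen.trans h hx
  · intro hx
    exact Relation.ReflTransGen.trans (unit_symm h) hx

lemma unit_disjoint {v w x : W} (h : w ∉ unitOf H v) (h1 : x ∈ unitOf H v)
    (h2 : x ∈ unitOf H w) : False :=
  h (Relation.ReflTransGen.trans h1 (unit_symm h2))

/-- No vertex has four distinct neighbours. -/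
lemma not_four (hdeg : ∀ v : W, (H.neighborSet v).ncard ≤ 3) {v a b c d : W} (hab : a ≠ b) (hac : a ≠ c) (had : a ≠ d) (hbc : b ≠ c)
    (hbd : b ≠ d) (hcd : c ≠ d) (ha : H.Adj v a) (hb : H.Adj v b) (hc : H.Adj v c)
    (hd : H.Adj v d) : False := by
  have hsub : ({a, b, c, d} : Set W) ⊆ H.neighborSet v := by
    intro x hx
    rcases hx with rfl | rfl | rfl | rfl
    · exact ha
    · exact hb
    · exact hc
    · exact hd
  have h4 : ({a, b, c, d} : Set W).ncard = 4 := by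
    rw [Set.ncard_insert_of_notMem (by simp [hab, hac, had]),
      Set.ncard_insert_of_notMem (by simp [hbc, hbd]),
      Set.ncard_insert_of_notMem (by simp [hcd]), Set.ncard_singleton]
  have := Set.ncard_le_ncard hsub (Set.toFinite _)
  have := hdeg v
  omega

lemma nbr_pin (hdeg : ∀ v : W, (H.neighborSet v).ncard ≤ 3) {v a b c x : W} (hab : a ≠ b) (hac : a ≠ c) (hbc : b ≠ c)
    (ha : H.Adj v a) (hb : H.Adj v b) (hc : H.Adj v c) (hx : H.Adj v x) :
    x = a ∨ x = b ∨ x = c := by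
  by_contra hcon
  push_neg at hcon
  exact not_four hdeg hab hac hcon.1.symm hbc hcon.2.1.symm hcon.2.2.symm ha hb hc hx

lemma Dia.swap {a b c d : W} (h : Dia H a b c d) : Dia H a c b d :=
  ⟨h.1.symm, h.2.2.1, h.2.1, h.2.2.2.2.1, h.2.2.2.1, h.2.2.2.2.2⟩

lemma Dia.flip {a b c d : W} (h : Dia H a b c d) : Dia H d b c a :=
  ⟨h.1, h.2.2.2.1, h.2.2.2.2.1, h.2.1, h.2.2.1, h.2.2.2.2.2.symm⟩

lemma Dia.nadj {a b c d : W}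
    (hK4 : ∀ a b c d : W, H.Adj a b → H.Adj a c → H.Adj a d → H.Adj b c → H.Adj b d →
      H.Adj c d → False)
    (h : Dia H a b c d) : ¬ H.Adj a d := fun had =>
  hK4 a b c d h.2.1 h.2.2.1 had h.1 h.2.2.2.1.symm h.2.2.2.2.1.symm

/-- The neighbours of a center of a diamond are exactly the other three diamond vertices. -/
lemma Dia.nbr_b (hdeg : ∀ v : W, (H.neighborSet v).ncard ≤ 3) {a b c d : W}
    (h : Dia H a b c d) {x : W} (hx : H.Adj b x) : x = a ∨ x = c ∨ x = d := by
  have hac : a ≠ c := h.2.2.1.ne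
  have hcd : c ≠ d := h.2.2.2.2.1.ne'
  exact nbr_pin hdeg hac h.2.2.2.2.2 hcd h.2.1.symm h.1 h.2.2.2.1.symm hx

lemma Dia.nbr_c (hdeg : ∀ v : W, (H.neighborSet v).ncard ≤ 3) {a b c d : W}
    (h : Dia H a b c d) {x : W} (hx : H.Adj c x) : x = a ∨ x = b ∨ x = d :=
  h.swap.nbr_b hdeg hx

end PK

end PKdefs
namespace PK

section Structure

variable {W : Type*} [Fintype W] {H : SimpleGraph W}

/-- Abbreviation for the three hypotheses we carry around. -/
def Ctx (H : SimpleGraph W) : Prop :=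
  (∀ v : W, (H.neighborSet v).ncard ≤ 3) ∧
  (∀ v : W, ∃ a b, H.Adj v a ∧ H.Adj v b ∧ H.Adj a b) ∧
  (∀ a b c d : W, H.Adj a b → H.Adj a c → H.Adj a d → H.Adj b c → H.Adj b d →
      H.Adj c d → False)

/-- Two different triangles at `v` produce a diamond. -/
lemma indi_of_two_tris (C : Ctx H) {v a b c d : W} (hva : H.Adj v a) (hvb : H.Adj v b)
    (hab : H.Adj a b) (hvc : H.Adj v c) (hvd : H.Adj v d) (hcd : H.Adj c d)
    (hne : ¬((c = a ∧ d = b) ∨ (c = b ∧ d = a))) : InDia H v := by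
  obtain ⟨hdeg, -, -⟩ := C
  push_neg at hne
  by_cases hca : c = a
  · subst hca
    exact ⟨b, v, c, d, ⟨hva, hvb.symm, hab.symm, hvd.symm, hcd.symm,
      fun h => (hne.1 rfl) h.symm⟩, Or.inr (Or.inl rfl)⟩
  · by_cases hcb : c = b
    · subst hcb
      exact ⟨a, v, c, d, ⟨hvb, hva.symm, hab, hvd.symm, hcd.symm,
        fun h => (hne.2 rfl) h.symm⟩, Or.inr (Or.inl rfl)⟩
    · by_cases hda : d = a
      · subst hda
        exact ⟨b, v, d, c, ⟨hva, hvb.symm, hab.symm, hvc.symm, hcd,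
          fun h => hcb h.symm⟩, Or.inr (Or.inl rfl)⟩
      · by_cases hdb : d = b
        · subst hdb
          exact ⟨a, v, d, c, ⟨hvb, hva.symm, hab, hvc.symm, hcd,
            fun h => hca h.symm⟩, Or.inr (Or.inl rfl)⟩
        · rcases nbr_pin hdeg hab.ne (fun h => hca h.symm) (fun h => hcb h.symm)
            hva hvb hvc hvd with h | h | h
          · exact absurd h hda
          · exact absurd h hdb
          · exact absurd h (fun h' => hcd.ne h'.symm)

/-- If `u` is not in a diamond and lies in the triangle `u x y`, any triangle edge at
`u` goes to `x` or `y`. -/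
lemma triE_pin (C : Ctx H) {u x y w : W} (hnd : ¬ InDia H u) (hx : H.Adj u x)
    (hy : H.Adj u y) (hxy : H.Adj x y) (ht : triE H u w) : w = x ∨ w = y := by
  obtain ⟨huw, z, hz1, hz2⟩ := ht
  by_contra hcon
  push_neg at hcon
  have hzw : z ≠ w := fun h => ((h ▸ hz2 : H.Adj w w)).ne rfl
  have hz : z = x ∨ z = y ∨ z = w :=
    nbr_pin C.1 hxy.ne (fun h => hcon.1 h.symm) (fun h => hcon.2 h.symm) hx hy huw hz1
  rcases hz with rfl | rfl | rfl
  · refine hnd (indi_of_two_tris C hx hy hxy hx huw hz2.symm ?_)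
    push_neg
    exact ⟨fun _ => hcon.2, fun h => absurd h hxy.ne⟩
  · refine hnd (indi_of_two_tris C hx hy hxy hy huw hz2.symm ?_)
    push_neg
    exact ⟨fun h => absurd h hxy.ne', fun _ => hcon.1⟩
  · exact hzw rfl

/-- An end of a diamond has neighbours `b', c'` and at most one other. -/
lemma dia_end_pin (C : Ctx H) {a' b' c' d' : W} (hD : Dia H a' b' c' d') {x y : W}
    (hx : H.Adj a' x) (hy : H.Adj a' y) (hxb : x ≠ b') (hxc : x ≠ c') :
    y = b' ∨ y = c' ∨ y = x := by
  exact nbr_pin C.1 hD.1.ne (fun h => hxb h.symm) (fun h => hxc h.symm)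
    hD.2.1 hD.2.2.1 hx hy

/-- A triangle mate of a vertex not in a diamond is not in a diamond either. -/
lemma notInDia_mate (C : Ctx H) {v a b : W} (hnd : ¬ InDia H v) (hva : H.Adj v a)
    (hvb : H.Adj v b) (hab : H.Adj a b) : ¬ InDia H a := by
  intro hia
  obtain ⟨a', b', c', d', hD, hmem⟩ := hia
  have hvD : ¬(v = a' ∨ v = b' ∨ v = c' ∨ v = d') := fun h => hnd ⟨a', b', c', d', hD, h⟩
  have hend : ∀ (a₀ b₀ c₀ d₀ : W), Dia H a₀ b₀ c₀ d₀ →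
      ¬(v = a₀ ∨ v = b₀ ∨ v = c₀ ∨ v = d₀) → a = a₀ → False := by
    intro a₀ b₀ c₀ d₀ hD₀ hvD₀ ha₀
    subst ha₀
    have hvb₀ : v ≠ b₀ := fun h => hvD₀ (Or.inr (Or.inl h))
    have hvc₀ : v ≠ c₀ := fun h => hvD₀ (Or.inr (Or.inr (Or.inl h)))
    rcases dia_end_pin C hD₀ hva.symm hab hvb₀ hvc₀ with hb | hb | hb
    · -- b = b₀ is a center, so v (a neighbour of b) is in the diamond
      subst hb
      rcases hD₀.nbr_b C.1 hvb.symm with h | h | h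
      · exact hvD₀ (Or.inl h)
      · exact hvD₀ (Or.inr (Or.inr (Or.inl h)))
      · exact hvD₀ (Or.inr (Or.inr (Or.inr h)))
    · subst hb
      rcases hD₀.nbr_c C.1 hvb.symm with h | h | h
      · exact hvD₀ (Or.inl h)
      · exact hvD₀ (Or.inr (Or.inl h))
      · exact hvD₀ (Or.inr (Or.inr (Or.inr h)))
    · exact hvb.ne hb.symm
  rcases hmem with rfl | rfl | rfl | rfl
  · exact hend a b' c' d' hD hvD rfl
  · -- a is a center
    rcases hD.nbr_b C.1 hva.symm with h | h | h
    · exact hvD (Or.inl h)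
    · exact hvD (Or.inr (Or.inr (Or.inl h)))
    · exact hvD (Or.inr (Or.inr (Or.inr h)))
  · rcases hD.nbr_c C.1 hva.symm with h | h | h
    · exact hvD (Or.inl h)
    · exact hvD (Or.inr (Or.inl h))
    · exact hvD (Or.inr (Or.inr (Or.inr h)))
  · exact hend a b' c' a' hD.flip (fun h => hvD (by tauto)) rfl

/-- The unit of a vertex not in a diamond is its (unique) triangle. -/
lemma unit_tri (C : Ctx H) {v a b : W} (hnd : ¬ InDia H v) (hva : H.Adj v a)
    (hvb : H.Adj v b) (hab : H.Adj a b) : unitOf H v = {v, a, b} := by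
  apply Set.eq_of_subset_of_subset
  · intro w hw
    induction hw with
    | refl => exact Or.inl rfl
    | @tail u w hrtg hstep ih =>
      rcases ih with rfl | rfl | rfl
      · rcases triE_pin C hnd hva hvb hab hstep with rfl | rfl
        · exact Or.inr (Or.inl rfl)
        · exact Or.inr (Or.inr rfl)
      · have hnda : ¬ InDia H u := notInDia_mate C hnd hva hvb hab
        rcases triE_pin C hnda hva.symm hab hvb hstep with rfl | rfl
        · exact Or.inl rfl
        · exact Or.inr (Or.inr rfl)
      · have hndb : ¬ InDia H u := notInDia_mate C hnd hvb hva hab.symm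
        rcases triE_pin C hndb hvb.symm hab.symm hva hstep with rfl | rfl
        · exact Or.inl rfl
        · exact Or.inr (Or.inl rfl)
  · intro w hw
    rcases hw with rfl | rfl | rfl
    · exact mem_unitOf_self w
    · exact triE_mem_unit ⟨hva, b, hvb, hab⟩
    · exact triE_mem_unit ⟨hvb, a, hva, hab.symm⟩

/-- A triangle edge from an end of a diamond stays in the diamond. -/
lemma dia_end_step (C : Ctx H) {a b c d : W} (h : Dia H a b c d) {w : W}
    (ht : triE H a w) : w = a ∨ w = b ∨ w = c ∨ w = d := by
  obtain ⟨haw, z, hz1, hz2⟩ := ht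
  by_contra hcon
  push_neg at hcon
  rcases dia_end_pin C h haw hz1 hcon.2.1 hcon.2.2.1 with rfl | rfl | rfl
  · rcases h.nbr_b C.1 hz2.symm with h' | h' | h'
    · exact hcon.1 h'
    · exact hcon.2.2.1 h'
    · exact hcon.2.2.2 h'
  · rcases h.nbr_c C.1 hz2.symm with h' | h' | h'
    · exact hcon.1 h'
    · exact hcon.2.1 h'
    · exact hcon.2.2.2 h'
  · exact hz2.ne rfl

/-- The diamond is closed under triangle edges. -/
lemma dia_closed (C : Ctx H) {a b c d : W} (h : Dia H a b c d) {u w : W}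
    (hu : u = a ∨ u = b ∨ u = c ∨ u = d) (ht : triE H u w) :
    w = a ∨ w = b ∨ w = c ∨ w = d := by
  rcases hu with rfl | rfl | rfl | rfl
  · exact dia_end_step C h ht
  · rcases h.nbr_b C.1 ht.1 with h' | h' | h'
    · exact Or.inl h'
    · exact Or.inr (Or.inr (Or.inl h'))
    · exact Or.inr (Or.inr (Or.inr h'))
  · rcases h.nbr_c C.1 ht.1 with h' | h' | h'
    · exact Or.inl h'
    · exact Or.inr (Or.inl h')
    · exact Or.inr (Or.inr (Or.inr h'))
  · rcases dia_end_step C h.flip ht with h' | h' | h' | h'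
    · exact Or.inr (Or.inr (Or.inr h'))
    · exact Or.inr (Or.inl h')
    · exact Or.inr (Or.inr (Or.inl h'))
    · exact Or.inl h'

lemma dia_triE_ab {a b c d : W} (h : Dia H a b c d) : triE H a b :=
  ⟨h.2.1, c, h.2.2.1, h.1⟩

lemma dia_triE_ac {a b c d : W} (h : Dia H a b c d) : triE H a c :=
  ⟨h.2.2.1, b, h.2.1, h.1.symm⟩

lemma dia_triE_bc {a b c d : W} (h : Dia H a b c d) : triE H b c :=
  ⟨h.1, a, h.2.1.symm, h.2.2.1.symm⟩

lemma dia_triE_bd {a b c d : W} (h : Dia H a b c d) : triE H b d :=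
  ⟨h.2.2.2.1.symm, c, h.1, h.2.2.2.2.1⟩

lemma dia_triE_cd {a b c d : W} (h : Dia H a b c d) : triE H c d :=
  ⟨h.2.2.2.2.1.symm, b, h.1.symm, h.2.2.2.1⟩

/-- The unit of any vertex of a diamond is the diamond. -/
lemma unit_dia (C : Ctx H) {a b c d : W} (h : Dia H a b c d) {v : W}
    (hv : v = a ∨ v = b ∨ v = c ∨ v = d) : unitOf H v = {a, b, c, d} := by
  apply Set.eq_of_subset_of_subset
  · intro w hw
    induction hw with
    | refl => simpa using hv
    | @tail u w hrtg hstep ih =>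
      have : w = a ∨ w = b ∨ w = c ∨ w = d := dia_closed C h (by simpa using ih) hstep
      simpa using this
  · have hmema : ∀ x, x = a ∨ x = b ∨ x = c ∨ x = d → x ∈ unitOf H a := by
      rintro x (rfl | rfl | rfl | rfl)
      · exact mem_unitOf_self x
      · exact triE_mem_unit (dia_triE_ab h)
      · exact triE_mem_unit (dia_triE_ac h)
      · exact Relation.ReflTransGen.tail (triE_mem_unit (dia_triE_ab h)) (dia_triE_bd h)
    intro w hw
    have hw' : w = a ∨ w = b ∨ w = c ∨ w = d := by simpa using hw
    have hva : v ∈ unitOf H a := hmema v hv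
    exact Relation.ReflTransGen.trans (unit_symm hva) (hmema w hw')

lemma indi_unit_indi (C : Ctx H) {v w : W} (hv : InDia H v) (hw : w ∈ unitOf H v) :
    InDia H w := by
  obtain ⟨a, b, c, d, hD, hmem⟩ := hv
  have := unit_dia C hD hmem
  rw [this] at hw
  exact ⟨a, b, c, d, hD, by simpa using hw⟩

lemma tri_not_dia_unit (C : Ctx H) {s : Set W} (h1 : TriUnit H s) (h2 : DiaUnit H s) :
    False := by
  obtain ⟨v, hnd, rfl⟩ := h1
  obtain ⟨u, hid, hs⟩ := h2
  exact hnd (indi_unit_indi C hid (hs ▸ mem_unitOf_self v))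

/-- Every vertex's unit is either a triangle or a diamond. -/
lemma shape (C : Ctx H) (v : W) :
    (∃ a b, ¬ InDia H v ∧ H.Adj v a ∧ H.Adj v b ∧ H.Adj a b ∧ unitOf H v = {v, a, b}) ∨
    (∃ a b c d, Dia H a b c d ∧ (v = a ∨ v = b ∨ v = c ∨ v = d) ∧
      unitOf H v = {a, b, c, d}) := by
  by_cases hv : InDia H v
  · obtain ⟨a, b, c, d, hD, hmem⟩ := hv
    exact Or.inr ⟨a, b, c, d, hD, hmem, unit_dia C hD hmem⟩
  · obtain ⟨a, b, hva, hvb, hab⟩ := C.2.1 v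
    exact Or.inl ⟨a, b, hv, hva, hvb, hab, unit_tri C hv hva hvb hab⟩

/-- Each vertex has at most one neighbour outside its unit. -/
lemma ext_unique (C : Ctx H) {v w w' : W} (h : H.Adj v w) (h' : H.Adj v w')
    (hw : w ∉ unitOf H v) (hw' : w' ∉ unitOf H v) : w = w' := by
  by_contra hne
  rcases shape C v with ⟨a, b, hnd, hva, hvb, hab, hu⟩ | ⟨a, b, c, d, hD, hv, hu⟩
  · have hwa : w ≠ a := fun h0 => hw (hu ▸ (by simp [h0]))
    have hwb : w ≠ b := fun h0 => hw (hu ▸ (by simp [h0]))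
    have hw'a : w' ≠ a := fun h0 => hw' (hu ▸ (by simp [h0]))
    have hw'b : w' ≠ b := fun h0 => hw' (hu ▸ (by simp [h0]))
    exact not_four C.1 hab.ne (fun h0 => hwa h0.symm) (fun h0 => hw'a h0.symm)
      (fun h0 => hwb h0.symm) (fun h0 => hw'b h0.symm) hne hva hvb h h'
  · have hmem : ∀ x, x = a ∨ x = b ∨ x = c ∨ x = d → x ∈ unitOf H v := by
      intro x hx; rw [hu]; simpa using hx
    rcases hv with rfl | rfl | rfl | rfl
    · have hwb : w ≠ b := fun h0 => hw (hmem w (Or.inr (Or.inl h0)))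
      have hwc : w ≠ c := fun h0 => hw (hmem w (Or.inr (Or.inr (Or.inl h0))))
      rcases dia_end_pin C hD h h' hwb hwc with h0 | h0 | h0
      · exact hw' (hmem w' (Or.inr (Or.inl h0)))
      · exact hw' (hmem w' (Or.inr (Or.inr (Or.inl h0))))
      · exact hne h0.symm
    · rcases hD.nbr_b C.1 h with h0 | h0 | h0 <;>
        [exact hw (hmem w (Or.inl h0));
         exact hw (hmem w (Or.inr (Or.inr (Or.inl h0))));
         exact hw (hmem w (Or.inr (Or.inr (Or.inr h0))))]
    · rcases hD.nbr_c C.1 h with h0 | h0 | h0 <;>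
        [exact hw (hmem w (Or.inl h0));
         exact hw (hmem w (Or.inr (Or.inl h0)));
         exact hw (hmem w (Or.inr (Or.inr (Or.inr h0))))]
    · have hwb : w ≠ b := fun h0 => hw (hmem w (Or.inr (Or.inl h0)))
      have hwc : w ≠ c := fun h0 => hw (hmem w (Or.inr (Or.inr (Or.inl h0))))
      rcases dia_end_pin C hD.flip h h' hwb hwc with h0 | h0 | h0
      · exact hw' (hmem w' (Or.inr (Or.inl h0)))
      · exact hw' (hmem w' (Or.inr (Or.inr (Or.inl h0))))
      · exact hne h0.symm

/-- An edge inside a unit is a triangle edge. -/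
lemma adj_in_unit_triE (C : Ctx H) {u w : W} (h : H.Adj u w) (hm : w ∈ unitOf H u) :
    triE H u w := by
  rcases shape C u with ⟨a, b, hnd, hua, hub, hab, hu⟩ | ⟨a, b, c, d, hD, hv, hu⟩
  · rw [hu] at hm
    rcases hm with rfl | rfl | rfl
    · exact absurd rfl h.ne
    · exact ⟨h, b, hub, hab⟩
    · exact ⟨h, a, hua, hab.symm⟩
  · rw [hu] at hm
    have hmm : w = a ∨ w = b ∨ w = c ∨ w = d := by simpa using hm
    rcases hv with rfl | rfl | rfl | rfl <;> rcases hmm with rfl | rfl | rfl | rfl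
    · exact absurd rfl h.ne
    · exact dia_triE_ab hD
    · exact dia_triE_ac hD
    · exact absurd h (hD.nadj C.2.2)
    · exact triE_symm (dia_triE_ab hD)
    · exact absurd rfl h.ne
    · exact dia_triE_bc hD
    · exact dia_triE_bd hD
    · exact triE_symm (dia_triE_ac hD)
    · exact triE_symm (dia_triE_bc hD)
    · exact absurd rfl h.ne
    · exact dia_triE_cd hD
    · exact absurd h.symm (hD.nadj C.2.2)
    · exact triE_symm (dia_triE_bd hD)
    · exact triE_symm (dia_triE_cd hD)
    · exact absurd rfl h.ne

lemma adj_of_edge {e : H.edgeSet} {u v : W} (he : (e : Sym2 W) = s(u, v)) : H.Adj u v :=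
  (H.mem_edgeSet).1 (he ▸ e.2)

lemma isExt_iff {e : H.edgeSet} {u v : W} (he : (e : Sym2 W) = s(u, v)) :
    IsExt H e ↔ v ∉ unitOf H u := by
  constructor
  · rintro ⟨x, y, hxy, hy⟩
    have h2 : s(u, v) = s(x, y) := he.symm.trans hxy
    rcases Sym2.eq_iff.1 h2 with ⟨rfl, rfl⟩ | ⟨rfl, rfl⟩
    · exact hy
    · exact fun hm => hy (unit_symm hm)
  · intro hv
    exact ⟨u, v, he, hv⟩

lemma isExt_at {e : H.edgeSet} {x : W} (h : IsExt H e) (hx : x ∈ (e : Sym2 W)) :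
    ∃ y, H.Adj x y ∧ y ∉ unitOf H x ∧ (e : Sym2 W) = s(x, y) := by
  obtain ⟨u, v, he, hv⟩ := h
  have hadj : H.Adj u v := adj_of_edge he
  rw [he, Sym2.mem_iff] at hx
  rcases hx with rfl | rfl
  · exact ⟨v, hadj, hv, he⟩
  · exact ⟨u, hadj.symm, fun hm => hv (unit_symm hm), he.trans Sym2.eq_swap⟩

/-- Two external edges sharing a vertex are equal. -/
lemma ext_edge_eq (C : Ctx H) {e f : H.edgeSet} {x : W} (he : IsExt H e)
    (hf : IsExt H f) (hxe : x ∈ (e : Sym2 W)) (hxf : x ∈ (f : Sym2 W)) : e = f := by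
  obtain ⟨y, hy1, hy2, hey⟩ := isExt_at he hxe
  obtain ⟨z, hz1, hz2, hfz⟩ := isExt_at hf hxf
  have hyz := ext_unique C hy1 hz1 hy2 hz2
  exact Subtype.ext (hey.trans (by rw [hyz, ← hfz]))

lemma unit_eq_at {s : Set W} {v x : W} (hs : s = unitOf H v) (hx : x ∈ s) :
    s = unitOf H x := by
  subst hs
  exact (unit_eq_of_mem hx).symm

end Structure

end PK

namespace PK

section Counting

variable {W : Type*} [Fintype W] {H : SimpleGraph W}

open scoped Classical

lemma triUnit_elim (C : Ctx H) {s : Set W} (h : TriUnit H s) :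
    ∃ v a b : W, H.Adj v a ∧ H.Adj v b ∧ H.Adj a b ∧ s = {v, a, b} := by
  obtain ⟨v, hnd, rfl⟩ := h
  rcases shape C v with ⟨a, b, _, hva, hvb, hab, hu⟩ | ⟨a, b, c, d, hD, hv, _⟩
  · exact ⟨v, a, b, hva, hvb, hab, hu⟩
  · exact absurd ⟨a, b, c, d, hD, hv⟩ hnd

lemma diaUnit_elim (C : Ctx H) {s : Set W} (h : DiaUnit H s) :
    ∃ a b c d : W, Dia H a b c d ∧ s = {a, b, c, d} := by
  obtain ⟨v, hid, rfl⟩ := h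
  obtain ⟨a, b, c, d, hD, hv⟩ := hid
  exact ⟨a, b, c, d, hD, unit_dia C hD hv⟩

lemma triUnit_ncard (C : Ctx H) {s : Set W} (h : TriUnit H s) : s.ncard = 3 := by
  obtain ⟨v, a, b, hva, hvb, hab, rfl⟩ := triUnit_elim C h
  rw [Set.ncard_insert_of_notMem (by simp [hva.ne, hvb.ne]),
    Set.ncard_insert_of_notMem (by simp [hab.ne]), Set.ncard_singleton]

lemma edge_cases_tri {v a b x y : W} (hadj : H.Adj x y) (hx : x ∈ ({v, a, b} : Set W))
    (hy : y ∈ ({v, a, b} : Set W)) :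
    s(x, y) = s(v, a) ∨ s(x, y) = s(v, b) ∨ s(x, y) = s(a, b) := by
  rcases hx with rfl | rfl | rfl <;> rcases hy with rfl | rfl | rfl
  · exact absurd rfl hadj.ne
  · exact Or.inl rfl
  · exact Or.inr (Or.inl rfl)
  · exact Or.inl Sym2.eq_swap
  · exact absurd rfl hadj.ne
  · exact Or.inr (Or.inr rfl)
  · exact Or.inr (Or.inl Sym2.eq_swap)
  · exact Or.inr (Or.inr Sym2.eq_swap)
  · exact absurd rfl hadj.ne

lemma edge_cases_dia (C : Ctx H) {a b c d x y : W} (hD : Dia H a b c d)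
    (hadj : H.Adj x y) (hx : x ∈ ({a, b, c, d} : Set W)) (hy : y ∈ ({a, b, c, d} : Set W)) :
    s(x, y) = s(a, b) ∨ s(x, y) = s(a, c) ∨ s(x, y) = s(b, c) ∨ s(x, y) = s(b, d) ∨
      s(x, y) = s(c, d) := by
  rcases hx with rfl | rfl | rfl | rfl <;> rcases hy with rfl | rfl | rfl | rfl
  · exact absurd rfl hadj.ne
  · exact Or.inl rfl
  · exact Or.inr (Or.inl rfl)
  · exact absurd hadj (hD.nadj C.2.2)
  · exact Or.inl Sym2.eq_swap
  · exact absurd rfl hadj.ne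
  · exact Or.inr (Or.inr (Or.inl rfl))
  · exact Or.inr (Or.inr (Or.inr (Or.inl rfl)))
  · exact Or.inr (Or.inl Sym2.eq_swap)
  · exact Or.inr (Or.inr (Or.inl Sym2.eq_swap))
  · exact absurd rfl hadj.ne
  · exact Or.inr (Or.inr (Or.inr (Or.inr rfl)))
  · exact absurd hadj.symm (hD.nadj C.2.2)
  · exact Or.inr (Or.inr (Or.inr (Or.inl Sym2.eq_swap)))
  · exact Or.inr (Or.inr (Or.inr (Or.inr Sym2.eq_swap)))
  · exact absurd rfl hadj.ne

/-- At a triangle unit, at most 2 external edges other than a given external edge at `u`. -/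
lemma bound_at (C : Ctx H) {s : Set W} (hTri : TriUnit H s) {e : H.edgeSet}
    (he : IsExt H e) {u : W} (hu : u ∈ s) (hue : u ∈ (e : Sym2 W)) :
    {f : H.edgeSet | IsExt H f ∧ f ≠ e ∧ ∃ y ∈ (f : Sym2 W), y ∈ s}.ncard ≤ 2 := by
  classical
  set T := {f : H.edgeSet | IsExt H f ∧ f ≠ e ∧ ∃ y ∈ (f : Sym2 W), y ∈ s} with hT
  have hpick : ∀ f ∈ T, ∃ y, y ∈ (f : Sym2 W) ∧ y ∈ s := by
    intro f hf
    obtain ⟨-, -, y, hy1, hy2⟩ := hf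
    exact ⟨y, hy1, hy2⟩
  have hcard : (s \ {u}).ncard = 2 := by
    rw [Set.ncard_diff_singleton_of_mem hu, triUnit_ncard C hTri]
  calc T.ncard ≤ (s \ {u}).ncard := by
        refine Set.ncard_le_ncard_of_injOn
          (fun (f : H.edgeSet) => if h : ∃ y, y ∈ (f : Sym2 W) ∧ y ∈ s then h.choose else u)
          ?_ ?_ (Set.toFinite _)
        · intro f hf
          rw [dif_pos (hpick f hf)]
          obtain ⟨hy1, hy2⟩ := (hpick f hf).choose_spec
          refine ⟨hy2, ?_⟩
          intro hyu
          simp only [Set.mem_singleton_iff] at hyu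
          exact hf.2.1 (ext_edge_eq C hf.1 he (hyu ▸ hy1) hue)
        · intro f1 h1 f2 h2 heq
          dsimp only at heq
          rw [dif_pos (hpick f1 h1), dif_pos (hpick f2 h2)] at heq
          exact ext_edge_eq C h1.1 h2.1 (hpick f1 h1).choose_spec.1
            (heq ▸ (hpick f2 h2).choose_spec.1)
    _ = 2 := hcard

/-- Refined bound: away from a given "late" edge `g` at the unit, at most one external
edge besides `e`. -/
lemma bound_at_early (C : Ctx H) {s : Set W} (hTri : TriUnit H s) {e : H.edgeSet}
    (he : IsExt H e) {u : W} (hu : u ∈ s) (hue : u ∈ (e : Sym2 W))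
    {g : H.edgeSet} (hg : IsExt H g) (hgne : g ≠ e) {yg : W} (hyg : yg ∈ (g : Sym2 W))
    (hygs : yg ∈ s) (L : H.edgeSet → Prop) (hgL : L g) :
    {f : H.edgeSet | IsExt H f ∧ f ≠ e ∧ (∃ y ∈ (f : Sym2 W), y ∈ s) ∧ ¬ L f}.ncard ≤ 1 := by
  classical
  have huyg : u ≠ yg := by
    intro h
    exact hgne (ext_edge_eq C hg he (h ▸ hyg) hue)
  set T := {f : H.edgeSet | IsExt H f ∧ f ≠ e ∧ (∃ y ∈ (f : Sym2 W), y ∈ s) ∧ ¬ L f} with hT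
  have hpick : ∀ f ∈ T, ∃ y, y ∈ (f : Sym2 W) ∧ y ∈ s := by
    intro f hf
    obtain ⟨-, -, ⟨y, hy1, hy2⟩, -⟩ := hf
    exact ⟨y, hy1, hy2⟩
  have hcard : (s \ {u, yg}).ncard = 1 := by
    rw [Set.ncard_diff (by intro x hx; rcases hx with rfl | rfl; exacts [hu, hygs])
      (Set.toFinite _), triUnit_ncard C hTri, Set.ncard_pair huyg]
  calc T.ncard ≤ (s \ {u, yg}).ncard := by
        refine Set.ncard_le_ncard_of_injOn
          (fun (f : H.edgeSet) => if h : ∃ y, y ∈ (f : Sym2 W) ∧ y ∈ s then h.choose else u)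
          ?_ ?_ (Set.toFinite _)
        · intro f hf
          rw [dif_pos (hpick f hf)]
          obtain ⟨hy1, hy2⟩ := (hpick f hf).choose_spec
          refine ⟨hy2, ?_⟩
          intro hyu
          rcases hyu with h | h
          · exact hf.2.1 (ext_edge_eq C hf.1 he (h ▸ hy1) hue)
          · refine hf.2.2.2 ?_
            have : f = g := ext_edge_eq C hf.1 hg (h ▸ hy1) hyg
            rw [this]; exact hgL
        · intro f1 h1 f2 h2 heq
          dsimp only at heq
          rw [dif_pos (hpick f1 h1), dif_pos (hpick f2 h2)] at heq
          exact ext_edge_eq C h1.1 h2.1 (hpick f1 h1).choose_spec.1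
            (heq ▸ (hpick f2 h2).choose_spec.1)
    _ = 1 := hcard

end Counting

end PK
namespace PK

section Realization

variable {W : Type*} [Fintype W] {H : SimpleGraph W}

open scoped Classical

lemma fin3_exists_ne_ne : ∀ x y : Fin 3, ∃ z, z ≠ x ∧ z ≠ y := by decide

lemma castSucc_ne_three : ∀ t : Fin 3, t.castSucc ≠ (3 : Fin 4) := by decide

lemma castSucc_inj3 {t u : Fin 3} (h : t.castSucc = u.castSucc) : t = u := by
  exact Fin.castSucc_inj.1 h

lemma core_strict : ∀ p q r : Fin 3, p ≠ q → p ≠ r → q ≠ r →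
    ∃ x y z : Fin 3, x ≠ y ∧ x ≠ z ∧ y ≠ z ∧ y ≠ p ∧ z ≠ p ∧ x ≠ q ∧ z ≠ q ∧ x ≠ r ∧
      y ≠ r := by decide

lemma core_relaxed : ∀ p q r : Fin 3, ∃ x y z : Fin 4, x ≠ y ∧ x ≠ z ∧ y ≠ z ∧
    y ≠ p.castSucc ∧ z ≠ p.castSucc ∧ x ≠ q.castSucc ∧ z ≠ q.castSucc ∧ x ≠ r.castSucc ∧
      y ≠ r.castSucc := by decide

lemma core_dia : ∀ p q : Fin 3, ∃ xab xac xbd xcd : Fin 3, xab ≠ xac ∧ xab ≠ p ∧ xac ≠ p ∧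
    xab ≠ xbd ∧ xac ≠ xcd ∧ xbd ≠ xcd ∧ xbd ≠ q ∧ xcd ≠ q := by decide

lemma complete3 {P Q R : Prop} (x y z : Fin 3) (hxy : P → Q → x ≠ y) (hxz : P → R → x ≠ z)
    (hyz : Q → R → y ≠ z) :
    ∃ p q r : Fin 3, p ≠ q ∧ p ≠ r ∧ q ≠ r ∧ (P → p = x) ∧ (Q → q = y) ∧ (R → r = z) := by
  by_cases hP : P <;> by_cases hQ : Q <;> by_cases hR : R
  · exact ⟨x, y, z, hxy hP hQ, hxz hP hR, hyz hQ hR, fun _ => rfl, fun _ => rfl, fun _ => rfl⟩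
  · obtain ⟨r, hr1, hr2⟩ := fin3_exists_ne_ne x y
    exact ⟨x, y, r, hxy hP hQ, hr1.symm, hr2.symm, fun _ => rfl, fun _ => rfl,
      fun h => absurd h hR⟩
  · obtain ⟨q, hq1, hq2⟩ := fin3_exists_ne_ne x z
    exact ⟨x, q, z, hq1.symm, hxz hP hR, hq2, fun _ => rfl, fun h => absurd h hQ,
      fun _ => rfl⟩
  · obtain ⟨q, hq1, -⟩ := fin3_exists_ne_ne x x
    obtain ⟨r, hr1, hr2⟩ := fin3_exists_ne_ne x q
    exact ⟨x, q, r, hq1.symm, hr1.symm, hr2.symm, fun _ => rfl, fun h => absurd h hQ,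
      fun h => absurd h hR⟩
  · obtain ⟨p, hp1, hp2⟩ := fin3_exists_ne_ne y z
    exact ⟨p, y, z, hp1, hp2, hyz hQ hR, fun h => absurd h hP, fun _ => rfl, fun _ => rfl⟩
  · obtain ⟨p, hp1, -⟩ := fin3_exists_ne_ne y y
    obtain ⟨r, hr1, hr2⟩ := fin3_exists_ne_ne y p
    exact ⟨p, y, r, hp1, hr2.symm, hr1.symm, fun h => absurd h hP, fun _ => rfl,
      fun h => absurd h hR⟩
  · obtain ⟨p, hp1, -⟩ := fin3_exists_ne_ne z z
    obtain ⟨q, hq1, hq2⟩ := fin3_exists_ne_ne z p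
    exact ⟨p, q, z, hq2.symm, hp1, hq1, fun h => absurd h hP, fun h => absurd h hQ,
      fun _ => rfl⟩
  · exact ⟨0, 1, 2, by decide, by decide, by decide, fun h => absurd h hP,
      fun h => absurd h hQ, fun h => absurd h hR⟩

lemma edge_rep (e : H.edgeSet) : ∃ u v : W, (e : Sym2 W) = s(u, v) ∧ H.Adj u v := by
  obtain ⟨val, hval⟩ := e
  induction val using Sym2.ind with
  | _ x y => exact ⟨x, y, rfl, H.mem_edgeSet.1 hval⟩

/-- A center `b` of a diamond has no external edge. -/
lemma dia_center_no_ext (C : Ctx H) {a b c d : W} (hD : Dia H a b c d) :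
    ¬ hasExt H b := by
  rintro ⟨w, hw, hwu⟩
  have hu : unitOf H b = {a, b, c, d} := unit_dia C hD (Or.inr (Or.inl rfl))
  rcases hD.nbr_b C.1 hw with rfl | rfl | rfl
  · exact hwu (hu ▸ (by simp))
  · exact hwu (hu ▸ (by simp))
  · exact hwu (hu ▸ (by simp))

lemma realization_tri (C : Ctx H) (I : Set (Set W)) (φ : H.edgeSet → Fin 3) {s : Set W}
    (hTri : TriUnit H s)
    (hdist : s ∉ I → ∀ x y : W, x ∈ s → y ∈ s → x ≠ y → hasExt H x → hasExt H y →
      extC H φ x ≠ extC H φ y) :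
    ∃ g : H.edgeSet → Fin 4, Spec H I φ s g := by
  obtain ⟨v, a, b, hva, hvb, hab, hs⟩ := triUnit_elim C hTri
  have hE1 : s(v, a) ≠ s(v, b) := fun h => by
    rcases Sym2.eq_iff.1 h with ⟨-, h2⟩ | ⟨h1, -⟩
    · exact hab.ne h2
    · exact hvb.ne h1
  have hE2 : s(v, a) ≠ s(a, b) := fun h => by
    rcases Sym2.eq_iff.1 h with ⟨h1, -⟩ | ⟨h1, -⟩
    · exact hva.ne h1
    · exact hvb.ne h1
  have hE3 : s(v, b) ≠ s(a, b) := fun h => by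
    rcases Sym2.eq_iff.1 h with ⟨h1, -⟩ | ⟨h1, -⟩
    · exact hva.ne h1
    · exact hvb.ne h1
  have hclass : ∀ e : H.edgeSet, BothIn H e s →
      (e : Sym2 W) = s(v, a) ∨ (e : Sym2 W) = s(v, b) ∨ (e : Sym2 W) = s(a, b) := by
    intro e hB
    obtain ⟨x', y', hxy', hadj'⟩ := edge_rep e
    have hx' : x' ∈ s := hB x' (by rw [hxy']; exact Sym2.mem_mk_left x' y')
    have hy' : y' ∈ s := hB y' (by rw [hxy']; exact Sym2.mem_mk_right x' y')
    rw [hs] at hx' hy'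
    rw [hxy']
    exact edge_cases_tri hadj' hx' hy'
  -- obtain the three colors
  obtain ⟨X, Y, Z, hXY, hXZ, hYZ, hYp, hZp, hXq, hZq, hXr, hYr, hI3⟩ :
      ∃ X Y Z : Fin 4, X ≠ Y ∧ X ≠ Z ∧ Y ≠ Z ∧
        (hasExt H v → Y ≠ (extC H φ v).castSucc) ∧
        (hasExt H v → Z ≠ (extC H φ v).castSucc) ∧
        (hasExt H a → X ≠ (extC H φ a).castSucc) ∧
        (hasExt H a → Z ≠ (extC H φ a).castSucc) ∧
        (hasExt H b → X ≠ (extC H φ b).castSucc) ∧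
        (hasExt H b → Y ≠ (extC H φ b).castSucc) ∧
        (s ∉ I → X ≠ 3 ∧ Y ≠ 3 ∧ Z ≠ 3) := by
    by_cases hsI : s ∈ I
    · obtain ⟨X, Y, Z, h1, h2, h3, h4, h5, h6, h7, h8, h9⟩ :=
        core_relaxed (extC H φ v) (extC H φ a) (extC H φ b)
      exact ⟨X, Y, Z, h1, h2, h3, fun _ => h4, fun _ => h5, fun _ => h6, fun _ => h7,
        fun _ => h8, fun _ => h9, fun h => absurd hsI h⟩
    · obtain ⟨p, q, r, hpq, hpr, hqr, hp, hq, hr⟩ :=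
        complete3 (P := hasExt H v) (Q := hasExt H a) (R := hasExt H b)
          (extC H φ v) (extC H φ a) (extC H φ b)
          (fun h1 h2 => hdist hsI v a (hs ▸ by simp) (hs ▸ by simp) hva.ne h1 h2)
          (fun h1 h2 => hdist hsI v b (hs ▸ by simp) (hs ▸ by simp) hvb.ne h1 h2)
          (fun h1 h2 => hdist hsI a b (hs ▸ by simp) (hs ▸ by simp) hab.ne h1 h2)
      obtain ⟨x, y, z, h1, h2, h3, h4, h5, h6, h7, h8, h9⟩ := core_strict p q r hpq hpr hqr
      refine ⟨x.castSucc, y.castSucc, z.castSucc,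
        fun h => h1 (castSucc_inj3 h), fun h => h2 (castSucc_inj3 h),
        fun h => h3 (castSucc_inj3 h), ?_, ?_, ?_, ?_, ?_, ?_,
        fun _ => ⟨castSucc_ne_three x, castSucc_ne_three y, castSucc_ne_three z⟩⟩
      · intro hx h; rw [← hp hx] at h; exact h4 (castSucc_inj3 h)
      · intro hx h; rw [← hp hx] at h; exact h5 (castSucc_inj3 h)
      · intro hx h; rw [← hq hx] at h; exact h6 (castSucc_inj3 h)
      · intro hx h; rw [← hq hx] at h; exact h7 (castSucc_inj3 h)
      · intro hx h; rw [← hr hx] at h; exact h8 (castSucc_inj3 h)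
      · intro hx h; rw [← hr hx] at h; exact h9 (castSucc_inj3 h)
  set g : H.edgeSet → Fin 4 := fun e =>
    if (e : Sym2 W) = s(v, a) then Z
    else if (e : Sym2 W) = s(v, b) then Y
    else if (e : Sym2 W) = s(a, b) then X
    else 0 with hg
  have hgva : ∀ e : H.edgeSet, (e : Sym2 W) = s(v, a) → g e = Z := by
    intro e he; rw [hg]; dsimp only; rw [if_pos he]
  have hgvb : ∀ e : H.edgeSet, (e : Sym2 W) = s(v, b) → g e = Y := by
    intro e he; rw [hg]; dsimp only; rw [if_neg (by rw [he]; exact hE1.symm), if_pos he]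
  have hgab : ∀ e : H.edgeSet, (e : Sym2 W) = s(a, b) → g e = X := by
    intro e he; rw [hg]; dsimp only
    rw [if_neg (by rw [he]; exact hE2.symm), if_neg (by rw [he]; exact hE3.symm), if_pos he]
  refine ⟨g, ?_, ?_, ?_, ?_, ?_⟩
  · -- (a1) distinct colors on the unit
    intro x0 _ e1 e2 _ _ hB1 hB2 hne
    rcases hclass e1 hB1 with h1 | h1 | h1 <;> rcases hclass e2 hB2 with h2 | h2 | h2
    · exact absurd (Subtype.ext (h1.trans h2.symm)) hne
    · rw [hgva e1 h1, hgvb e2 h2]; exact hYZ.symm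
    · rw [hgva e1 h1, hgab e2 h2]; exact hXZ.symm
    · rw [hgvb e1 h1, hgva e2 h2]; exact hYZ
    · exact absurd (Subtype.ext (h1.trans h2.symm)) hne
    · rw [hgvb e1 h1, hgab e2 h2]; exact hXY.symm
    · rw [hgab e1 h1, hgva e2 h2]; exact hXZ
    · rw [hgab e1 h1, hgvb e2 h2]; exact hXY
    · exact absurd (Subtype.ext (h1.trans h2.symm)) hne
  · -- (a2) at most one edge of color 3
    intro e1 e2 hB1 hB2 h31 h32
    by_contra hne
    have h1 := hclass e1 hB1
    have h2 := hclass e2 hB2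
    -- if s ∈ I, colors are distinct for distinct edges, contradiction with both = 3;
    -- in all cases two distinct edges have distinct colors
    have : g e1 ≠ g e2 := by
      rcases h1 with h1 | h1 | h1 <;> rcases h2 with h2 | h2 | h2
      · exact absurd (Subtype.ext (h1.trans h2.symm)) hne
      · rw [hgva e1 h1, hgvb e2 h2]; exact hYZ.symm
      · rw [hgva e1 h1, hgab e2 h2]; exact hXZ.symm
      · rw [hgvb e1 h1, hgva e2 h2]; exact hYZ
      · exact absurd (Subtype.ext (h1.trans h2.symm)) hne
      · rw [hgvb e1 h1, hgab e2 h2]; exact hXY.symm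
      · rw [hgab e1 h1, hgva e2 h2]; exact hXZ
      · rw [hgab e1 h1, hgvb e2 h2]; exact hXY
      · exact absurd (Subtype.ext (h1.trans h2.symm)) hne
    rw [h31, h32] at this
    exact this rfl
  · -- (a3) avoid the external color at each vertex
    intro x0 hx0 e1 hxe1 hB1 hext
    rw [hs] at hx0
    rcases hclass e1 hB1 with h1 | h1 | h1
    · rw [hgva e1 h1]
      have hx0' : x0 = v ∨ x0 = a := by rw [h1] at hxe1; exact Sym2.mem_iff.1 hxe1
      rcases hx0' with rfl | rfl
      · exact hZp hext
      · exact hZq hext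
    · rw [hgvb e1 h1]
      have hx0' : x0 = v ∨ x0 = b := by rw [h1] at hxe1; exact Sym2.mem_iff.1 hxe1
      rcases hx0' with rfl | rfl
      · exact hYp hext
      · exact hYr hext
    · rw [hgab e1 h1]
      have hx0' : x0 = a ∨ x0 = b := by rw [h1] at hxe1; exact Sym2.mem_iff.1 hxe1
      rcases hx0' with rfl | rfl
      · exact hXq hext
      · exact hXr hext
  · -- (a4) vacuous: s is a triangle unit
    intro hDia
    exact absurd hDia (fun h => tri_not_dia_unit C hTri h)
  · -- (a5) no color 3 on strict triangles
    intro _ hsI e1 hB1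
    obtain ⟨hX3, hY3, hZ3⟩ := hI3 hsI
    rcases hclass e1 hB1 with h1 | h1 | h1
    · rw [hgva e1 h1]; exact hZ3
    · rw [hgvb e1 h1]; exact hY3
    · rw [hgab e1 h1]; exact hX3

end Realization

end PK
namespace PK

section RealizationDia

variable {W : Type*} [Fintype W] {H : SimpleGraph W}

open scoped Classical

lemma sym2_ne_left {x y z w : W} (h1 : x ≠ z) (h2 : x ≠ w) : s(x, y) ≠ s(z, w) := fun h => by
  rcases Sym2.eq_iff.1 h with ⟨h', -⟩ | ⟨h', -⟩
  · exact h1 h'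
  · exact h2 h'

lemma sym2_ne_mixed {x y z w : W} (h1 : y ≠ w) (h2 : x ≠ w) : s(x, y) ≠ s(z, w) := fun h => by
  rcases Sym2.eq_iff.1 h with ⟨-, h'⟩ | ⟨h', -⟩
  · exact h1 h'
  · exact h2 h'

lemma sym2_ne_right {x y z w : W} (h1 : x ≠ z) (h2 : y ≠ z) : s(x, y) ≠ s(z, w) := fun h => by
  rcases Sym2.eq_iff.1 h with ⟨h', -⟩ | ⟨-, h'⟩
  · exact h1 h'
  · exact h2 h'

lemma realization_dia (C : Ctx H) (I : Set (Set W)) (φ : H.edgeSet → Fin 3) {s : Set W}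
    (hDia : DiaUnit H s) : ∃ g : H.edgeSet → Fin 4, Spec H I φ s g := by
  obtain ⟨a, b, c, d, hD, hs⟩ := diaUnit_elim C hDia
  have hbc : H.Adj b c := hD.1
  have hab : H.Adj a b := hD.2.1
  have hac : H.Adj a c := hD.2.2.1
  have hdb : H.Adj d b := hD.2.2.2.1
  have hdc : H.Adj d c := hD.2.2.2.2.1
  have had : a ≠ d := hD.2.2.2.2.2
  -- vertex distinctness
  have nab : a ≠ b := hab.ne
  have nac : a ≠ c := hac.ne
  have nbc : b ≠ c := hbc.ne
  have nbd : b ≠ d := fun h => hdb.ne h.symm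
  have ncd : c ≠ d := fun h => hdc.ne h.symm
  -- Sym2 distinctness
  have hN1 : s(a, b) ≠ s(b, c) := sym2_ne_left nab nac
  have hN2 : s(a, c) ≠ s(b, c) := sym2_ne_left nab nac
  have hN3 : s(a, c) ≠ s(a, b) := sym2_ne_mixed (fun h => nbc h.symm) nab
  have hN4 : s(b, d) ≠ s(b, c) := sym2_ne_mixed (fun h => ncd h.symm) nbc
  have hN5 : s(b, d) ≠ s(a, b) := sym2_ne_right (fun h => nab h.symm) (fun h => had h.symm)
  have hN6 : s(b, d) ≠ s(a, c) := sym2_ne_left (fun h => nab h.symm) nbc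
  have hN7 : s(c, d) ≠ s(b, c) := sym2_ne_right (fun h => nbc h.symm) (fun h => nbd h.symm)
  have hN8 : s(c, d) ≠ s(a, b) := sym2_ne_left (fun h => nac h.symm) (fun h => nbc h.symm)
  have hN9 : s(c, d) ≠ s(a, c) := sym2_ne_right (fun h => nac h.symm) (fun h => had h.symm)
  have hN10 : s(c, d) ≠ s(b, d) := sym2_ne_left (fun h => nbc h.symm) ncd
  have hclass : ∀ e : H.edgeSet, BothIn H e s →
      (e : Sym2 W) = s(a, b) ∨ (e : Sym2 W) = s(a, c) ∨ (e : Sym2 W) = s(b, c) ∨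
        (e : Sym2 W) = s(b, d) ∨ (e : Sym2 W) = s(c, d) := by
    intro e hB
    obtain ⟨x', y', hxy', hadj'⟩ := edge_rep e
    have hx' : x' ∈ s := hB x' (by rw [hxy']; exact Sym2.mem_mk_left x' y')
    have hy' : y' ∈ s := hB y' (by rw [hxy']; exact Sym2.mem_mk_right x' y')
    rw [hs] at hx' hy'
    rw [hxy']
    exact edge_cases_dia C hD hadj' hx' hy'
  obtain ⟨xab, xac, xbd, xcd, k1, k2, k3, k4, k5, k6, k7, k8⟩ :=
    core_dia (extC H φ a) (extC H φ d)
  set g : H.edgeSet → Fin 4 := fun e =>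
    if (e : Sym2 W) = s(b, c) then 3
    else if (e : Sym2 W) = s(a, b) then xab.castSucc
    else if (e : Sym2 W) = s(a, c) then xac.castSucc
    else if (e : Sym2 W) = s(b, d) then xbd.castSucc
    else if (e : Sym2 W) = s(c, d) then xcd.castSucc
    else 0 with hg
  have hgbc : ∀ e : H.edgeSet, (e : Sym2 W) = s(b, c) → g e = 3 := by
    intro e he; rw [hg]; dsimp only; rw [if_pos he]
  have hgab : ∀ e : H.edgeSet, (e : Sym2 W) = s(a, b) → g e = xab.castSucc := by
    intro e he; rw [hg]; dsimp only; rw [if_neg (by rw [he]; exact hN1), if_pos he]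
  have hgac : ∀ e : H.edgeSet, (e : Sym2 W) = s(a, c) → g e = xac.castSucc := by
    intro e he; rw [hg]; dsimp only
    rw [if_neg (by rw [he]; exact hN2), if_neg (by rw [he]; exact hN3), if_pos he]
  have hgbd : ∀ e : H.edgeSet, (e : Sym2 W) = s(b, d) → g e = xbd.castSucc := by
    intro e he; rw [hg]; dsimp only
    rw [if_neg (by rw [he]; exact hN4), if_neg (by rw [he]; exact hN5),
      if_neg (by rw [he]; exact hN6), if_pos he]
  have hgcd : ∀ e : H.edgeSet, (e : Sym2 W) = s(c, d) → g e = xcd.castSucc := by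
    intro e he; rw [hg]; dsimp only
    rw [if_neg (by rw [he]; exact hN7), if_neg (by rw [he]; exact hN8),
      if_neg (by rw [he]; exact hN9), if_neg (by rw [he]; exact hN10), if_pos he]
  -- color inequalities in `Fin 4`
  have c1 : xab.castSucc ≠ xac.castSucc := fun h => k1 (castSucc_inj3 h)
  have c4 : xab.castSucc ≠ xbd.castSucc := fun h => k4 (castSucc_inj3 h)
  have c5 : xac.castSucc ≠ xcd.castSucc := fun h => k5 (castSucc_inj3 h)
  have c6 : xbd.castSucc ≠ xcd.castSucc := fun h => k6 (castSucc_inj3 h)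
  have c3 : ∀ t : Fin 3, (3 : Fin 4) ≠ t.castSucc := fun t h => castSucc_ne_three t h.symm
  refine ⟨g, ?_, ?_, ?_, ?_, ?_⟩
  · -- (a1)
    intro x0 _ e1 e2 hxe1 hxe2 hB1 hB2 hne
    have hx1 := hxe1
    have hx2 := hxe2
    rcases hclass e1 hB1 with h1 | h1 | h1 | h1 | h1 <;>
      rcases hclass e2 hB2 with h2 | h2 | h2 | h2 | h2
    · exact absurd (Subtype.ext (h1.trans h2.symm)) hne
    · rw [hgab e1 h1, hgac e2 h2]; exact c1
    · rw [hgab e1 h1, hgbc e2 h2]; exact castSucc_ne_three xab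
    · rw [hgab e1 h1, hgbd e2 h2]; exact c4
    · -- ab vs cd : disjoint, contradiction via x0
      exfalso
      rw [h1, Sym2.mem_iff] at hx1
      rw [h2, Sym2.mem_iff] at hx2
      rcases hx1 with h1' | h1' <;> rcases hx2 with h2' | h2'
      · exact nac (h1'.symm.trans h2')
      · exact had (h1'.symm.trans h2')
      · exact nbc (h1'.symm.trans h2')
      · exact nbd (h1'.symm.trans h2')
    · rw [hgac e1 h1, hgab e2 h2]; exact c1.symm
    · exact absurd (Subtype.ext (h1.trans h2.symm)) hne
    · rw [hgac e1 h1, hgbc e2 h2]; exact castSucc_ne_three xac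
    · -- ac vs bd : disjoint
      exfalso
      rw [h1, Sym2.mem_iff] at hx1
      rw [h2, Sym2.mem_iff] at hx2
      rcases hx1 with h1' | h1' <;> rcases hx2 with h2' | h2'
      · exact nab (h1'.symm.trans h2')
      · exact had (h1'.symm.trans h2')
      · exact nbc (h2'.symm.trans h1')
      · exact ncd (h1'.symm.trans h2')
    · rw [hgac e1 h1, hgcd e2 h2]; exact c5
    · rw [hgbc e1 h1, hgab e2 h2]; exact c3 xab
    · rw [hgbc e1 h1, hgac e2 h2]; exact c3 xac
    · exact absurd (Subtype.ext (h1.trans h2.symm)) hne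
    · rw [hgbc e1 h1, hgbd e2 h2]; exact c3 xbd
    · rw [hgbc e1 h1, hgcd e2 h2]; exact c3 xcd
    · rw [hgbd e1 h1, hgab e2 h2]; exact c4.symm
    · -- bd vs ac : disjoint
      exfalso
      rw [h1, Sym2.mem_iff] at hx1
      rw [h2, Sym2.mem_iff] at hx2
      rcases hx1 with h1' | h1' <;> rcases hx2 with h2' | h2'
      · exact nab (h2'.symm.trans h1')
      · exact nbc (h1'.symm.trans h2')
      · exact had (h2'.symm.trans h1')
      · exact ncd (h2'.symm.trans h1')
    · rw [hgbd e1 h1, hgbc e2 h2]; exact castSucc_ne_three xbd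
    · exact absurd (Subtype.ext (h1.trans h2.symm)) hne
    · rw [hgbd e1 h1, hgcd e2 h2]; exact c6
    · -- cd vs ab : disjoint
      exfalso
      rw [h1, Sym2.mem_iff] at hx1
      rw [h2, Sym2.mem_iff] at hx2
      rcases hx1 with h1' | h1' <;> rcases hx2 with h2' | h2'
      · exact nac (h2'.symm.trans h1')
      · exact nbc (h2'.symm.trans h1')
      · exact had (h2'.symm.trans h1')
      · exact nbd (h2'.symm.trans h1')
    · rw [hgcd e1 h1, hgac e2 h2]; exact c5.symm
    · rw [hgcd e1 h1, hgbc e2 h2]; exact castSucc_ne_three xcd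
    · rw [hgcd e1 h1, hgbd e2 h2]; exact c6.symm
    · exact absurd (Subtype.ext (h1.trans h2.symm)) hne
  · -- (a2)
    intro e1 e2 hB1 hB2 h31 h32
    have h1' := hclass e1 hB1
    have h2' := hclass e2 hB2
    have hbc1 : (e1 : Sym2 W) = s(b, c) := by
      rcases h1' with h | h | h | h | h
      · exact absurd ((hgab e1 h) ▸ h31) (castSucc_ne_three xab)
      · exact absurd ((hgac e1 h) ▸ h31) (castSucc_ne_three xac)
      · exact h
      · exact absurd ((hgbd e1 h) ▸ h31) (castSucc_ne_three xbd)
      · exact absurd ((hgcd e1 h) ▸ h31) (castSucc_ne_three xcd)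
    have hbc2 : (e2 : Sym2 W) = s(b, c) := by
      rcases h2' with h | h | h | h | h
      · exact absurd ((hgab e2 h) ▸ h32) (castSucc_ne_three xab)
      · exact absurd ((hgac e2 h) ▸ h32) (castSucc_ne_three xac)
      · exact h
      · exact absurd ((hgbd e2 h) ▸ h32) (castSucc_ne_three xbd)
      · exact absurd ((hgcd e2 h) ▸ h32) (castSucc_ne_three xcd)
    exact Subtype.ext (hbc1.trans hbc2.symm)
  · -- (a3)
    intro x0 hx0 e1 hxe1 hB1 hext
    rw [hs] at hx0
    have hx0' : x0 = a ∨ x0 = b ∨ x0 = c ∨ x0 = d := by simpa using hx0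
    rcases hx0' with rfl | rfl | rfl | rfl
    · rcases hclass e1 hB1 with h1 | h1 | h1 | h1 | h1
      · rw [hgab e1 h1]; exact fun h => k2 (castSucc_inj3 h)
      · rw [hgac e1 h1]; exact fun h => k3 (castSucc_inj3 h)
      · exfalso; rw [h1, Sym2.mem_iff] at hxe1
        rcases hxe1 with h | h
        · exact nab h
        · exact nac h
      · exfalso; rw [h1, Sym2.mem_iff] at hxe1
        rcases hxe1 with h | h
        · exact nab h
        · exact had h
      · exfalso; rw [h1, Sym2.mem_iff] at hxe1
        rcases hxe1 with h | h
        · exact nac h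
        · exact had h
    · exact absurd hext (dia_center_no_ext C hD)
    · exact absurd hext (dia_center_no_ext C hD.swap)
    · rcases hclass e1 hB1 with h1 | h1 | h1 | h1 | h1
      · exfalso; rw [h1, Sym2.mem_iff] at hxe1
        rcases hxe1 with h | h
        · exact had h.symm
        · exact nbd h.symm
      · exfalso; rw [h1, Sym2.mem_iff] at hxe1
        rcases hxe1 with h | h
        · exact had h.symm
        · exact ncd h.symm
      · exfalso; rw [h1, Sym2.mem_iff] at hxe1
        rcases hxe1 with h | h
        · exact nbd h.symm
        · exact ncd h.symm
      · rw [hgbd e1 h1]; exact fun h => k7 (castSucc_inj3 h)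
      · rw [hgcd e1 h1]; exact fun h => k8 (castSucc_inj3 h)
  · -- (a4)
    intro _ e hB h3 x hx w hw
    have hcls : (e : Sym2 W) = s(b, c) := by
      rcases hclass e hB with h | h | h | h | h
      · exact absurd ((hgab e h) ▸ h3) (castSucc_ne_three xab)
      · exact absurd ((hgac e h) ▸ h3) (castSucc_ne_three xac)
      · exact h
      · exact absurd ((hgbd e h) ▸ h3) (castSucc_ne_three xbd)
      · exact absurd ((hgcd e h) ▸ h3) (castSucc_ne_three xcd)
    rw [hcls, Sym2.mem_iff] at hx
    rw [hs]
    rcases hx with rfl | rfl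
    · rcases hD.nbr_b C.1 hw with rfl | rfl | rfl <;> simp
    · rcases hD.nbr_c C.1 hw with rfl | rfl | rfl <;> simp
  · -- (a5)
    intro hTri _ _ _
    exact absurd hTri (fun h => tri_not_dia_unit C h hDia)

end RealizationDia

end PK
namespace PK

section Main

variable {W : Type*} [Fintype W] {H : SimpleGraph W}

open scoped Classical

lemma isUnit_eq_at {t : Set W} (h : ∃ v : W, t = unitOf H v) {x : W} (hx : x ∈ t) :
    t = unitOf H x := by
  obtain ⟨v, rfl⟩ := h
  exact (unit_eq_of_mem hx).symm

lemma triUnit_eq_at {t : Set W} (h : TriUnit H t) {x : W} (hx : x ∈ t) :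
    t = unitOf H x :=
  isUnit_eq_at ⟨h.choose, h.choose_spec.2⟩ hx

lemma diaUnit_eq_at {t : Set W} (h : DiaUnit H t) {x : W} (hx : x ∈ t) :
    t = unitOf H x :=
  isUnit_eq_at ⟨h.choose, h.choose_spec.2⟩ hx

lemma vec_ne_three : ∀ i : Fin 4, i ≠ 3 → ![1, 1, 1, 3] i = 1 := by decide

lemma vec_three : ![1, 1, 1, 3] (3 : Fin 4) = 3 := by decide

theorem main (H : SimpleGraph W) (C : Ctx H) :
    ∃ c : H.edgeSet → Fin 4, H.IsPackingEdgeColoring ![1, 1, 1, 3] c := by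
  classical
  haveI : Fintype H.edgeSet := Fintype.ofFinite _
  -- edge representatives
  have hER : ∀ e : H.edgeSet, ∃ u v : W, (e : Sym2 W) = s(u, v) ∧ H.Adj u v :=
    fun e => edge_rep e
  choose u₀ v₀ hrep hadj using hER
  have hmem_u : ∀ e : H.edgeSet, u₀ e ∈ (e : Sym2 W) := by
    intro e; rw [hrep e]; exact Sym2.mem_mk_left _ _
  have hmem_v : ∀ e : H.edgeSet, v₀ e ∈ (e : Sym2 W) := by
    intro e; rw [hrep e]; exact Sym2.mem_mk_right _ _
  have hmem_cases : ∀ (e : H.edgeSet) (x : W), x ∈ (e : Sym2 W) → x = u₀ e ∨ x = v₀ e := by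
    intro e x hx; rw [hrep e, Sym2.mem_iff] at hx; exact hx
  -- maximal independent set of good triangle units
  obtain ⟨I, hIP, hIind, hImax⟩ := exists_maximal_indep
    (fun s : Set W => TriUnit H s ∧ ¬ ∃ t : Set W, DiaUnit H t ∧ UAdj H s t)
    (fun s t : Set W => UAdj H s t)
  -- basic facts about internal edges
  have hv_in : ∀ e : H.edgeSet, ¬ IsExt H e → v₀ e ∈ unitOf H (u₀ e) := by
    intro e hEe
    by_contra hn
    exact hEe ⟨u₀ e, v₀ e, hrep e, hn⟩
  have hunit_x : ∀ (e : H.edgeSet), ¬ IsExt H e → ∀ x ∈ (e : Sym2 W),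
      unitOf H x = unitOf H (u₀ e) := by
    intro e hEe x hx
    rcases hmem_cases e x hx with rfl | rfl
    · rfl
    · exact unit_eq_of_mem (hv_in e hEe)
  have hBoth : ∀ e : H.edgeSet, ¬ IsExt H e → BothIn H e (unitOf H (u₀ e)) := by
    intro e hEe y hy
    rcases hmem_cases e y hy with rfl | rfl
    · exact mem_unitOf_self _
    · exact hv_in e hEe
  have hUnitKind : ∀ x : W, TriUnit H (unitOf H x) ∨ DiaUnit H (unitOf H x) := by
    intro x
    by_cases h : InDia H x
    · exact Or.inr ⟨x, h, rfl⟩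
    · exact Or.inl ⟨x, h, rfl⟩
  -- a late external edge at every strict unit
  have hlateedge : ∀ s : Set W, Strict H I s → ∃ (g : H.edgeSet) (yg : W),
      IsExt H g ∧ Late H I g ∧ yg ∈ (g : Sym2 W) ∧ yg ∈ s := by
    intro s hS
    by_cases hDA : ∃ t : Set W, DiaUnit H t ∧ UAdj H s t
    · obtain ⟨t, hDt, hne_t, x, hxs, y, hyt, hadj'⟩ := hDA
      have hsx : s = unitOf H x := triUnit_eq_at hS.1 hxs
      have hty : t = unitOf H y := diaUnit_eq_at hDt hyt
      have hyns : y ∉ unitOf H x := by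
        intro hm
        exact hne_t (by rw [hty, hsx, unit_eq_of_mem hm])
      have hInDy : InDia H y := by
        obtain ⟨w0, hw0, htw⟩ := hDt
        exact indi_unit_indi C hw0 (htw ▸ hyt)
      exact ⟨⟨s(x, y), hadj'⟩, x, ⟨x, y, rfl, hyns⟩,
        Or.inr ⟨y, Sym2.mem_mk_right _ _, Or.inl hInDy⟩, Sym2.mem_mk_left _ _, hxs⟩
    · obtain ⟨t, htI, hR⟩ := hImax s ⟨hS.1, hDA⟩ hS.2
      have htT : TriUnit H t := (hIP t htI).1
      rcases hR with ⟨hne_t, x, hxs, y, hyt, hadj'⟩ | ⟨hne_t, y, hyt, x, hxs, hadj'⟩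
      · have hsx : s = unitOf H x := triUnit_eq_at hS.1 hxs
        have hty : t = unitOf H y := triUnit_eq_at htT hyt
        have hyns : y ∉ unitOf H x := by
          intro hm
          exact hne_t (by rw [hty, hsx, unit_eq_of_mem hm])
        exact ⟨⟨s(x, y), hadj'⟩, x, ⟨x, y, rfl, hyns⟩,
          Or.inr ⟨y, Sym2.mem_mk_right _ _, Or.inr (hty ▸ htI)⟩, Sym2.mem_mk_left _ _, hxs⟩
      · have hsx : s = unitOf H x := triUnit_eq_at hS.1 hxs
        have hty : t = unitOf H y := triUnit_eq_at htT hyt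
        have hyns : y ∉ unitOf H x := by
          intro hm
          exact hne_t (by rw [hty, hsx, unit_eq_of_mem hm])
        exact ⟨⟨s(x, y), hadj'.symm⟩, x, ⟨x, y, rfl, hyns⟩,
          Or.inr ⟨y, Sym2.mem_mk_right _ _, Or.inr (hty ▸ htI)⟩, Sym2.mem_mk_left _ _, hxs⟩
  -- conflict relation bounds
  have hsymm : ∀ a b : H.edgeSet, confl H I a b → confl H I b a := by
    rintro a b ⟨hne, h1, h2, t, hSt, hx, hy⟩
    exact ⟨hne.symm, h2, h1, t, hSt, hy, hx⟩
  have hirr : ∀ a : H.edgeSet, ¬ confl H I a a := fun a h => h.1 rfl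
  have hempty : ∀ (e : H.edgeSet) (w : W), ¬ Strict H I (unitOf H w) →
      {f : H.edgeSet | Strict H I (unitOf H w) ∧ IsExt H f ∧ f ≠ e ∧
        ∃ y ∈ (f : Sym2 W), y ∈ unitOf H w} = ∅ :=
    fun e w hw => Set.eq_empty_iff_forall_notMem.2 (fun f hf => hw hf.1)
  have hAbound : ∀ (e : H.edgeSet), IsExt H e → ∀ (w : W), w ∈ (e : Sym2 W) →
      {f : H.edgeSet | Strict H I (unitOf H w) ∧ IsExt H f ∧ f ≠ e ∧
        ∃ y ∈ (f : Sym2 W), y ∈ unitOf H w}.ncard ≤ 2 := by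
    intro e hEe w hw
    by_cases hSt : Strict H I (unitOf H w)
    · refine le_trans (Set.ncard_le_ncard ?_ (Set.toFinite _))
        (bound_at C hSt.1 hEe (mem_unitOf_self w) hw)
      exact fun f hf => hf.2
    · rw [hempty e w hSt]
      simp
  have hbound_late : ∀ e : H.edgeSet, Late H I e → {f | confl H I e f}.ncard ≤ 2 := by
    intro e hLe
    by_cases hEe : IsExt H e
    · obtain ⟨x0, hx0e, hx0p⟩ := hLe.resolve_left (not_not_intro hEe)
      have hsub : {f | confl H I e f} ⊆
          {f : H.edgeSet | Strict H I (unitOf H (u₀ e)) ∧ IsExt H f ∧ f ≠ e ∧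
            ∃ y ∈ (f : Sym2 W), y ∈ unitOf H (u₀ e)} ∪
          {f : H.edgeSet | Strict H I (unitOf H (v₀ e)) ∧ IsExt H f ∧ f ≠ e ∧
            ∃ y ∈ (f : Sym2 W), y ∈ unitOf H (v₀ e)} := by
        rintro f ⟨hnef, hIe', hIf, t, hSt, ⟨x, hxe, hxt⟩, ⟨y, hyf, hyt⟩⟩
        have ht' : t = unitOf H x := triUnit_eq_at hSt.1 hxt
        rcases hmem_cases e x hxe with rfl | rfl
        · exact Or.inl ⟨ht' ▸ hSt, hIf, fun h => hnef h.symm, y, hyf, ht' ▸ hyt⟩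
        · exact Or.inr ⟨ht' ▸ hSt, hIf, fun h => hnef h.symm, y, hyf, ht' ▸ hyt⟩
      have hnost : ¬ Strict H I (unitOf H x0) := by
        rcases hx0p with hInD | hII
        · exact fun hSt => tri_not_dia_unit C hSt.1 ⟨x0, hInD, rfl⟩
        · exact fun hSt => hSt.2 hII
      have hle := le_trans (Set.ncard_le_ncard hsub (Set.toFinite _))
        (Set.ncard_union_le _ _)
      rcases hmem_cases e x0 hx0e with rfl | rfl
      · rw [hempty e (u₀ e) hnost] at hle
        have h2 := hAbound e hEe (v₀ e) (hmem_v e)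
        simp only [Set.ncard_empty] at hle
        omega
      · rw [hempty e (v₀ e) hnost] at hle
        have h2 := hAbound e hEe (u₀ e) (hmem_u e)
        simp only [Set.ncard_empty] at hle
        omega
    · have : {f | confl H I e f} = ∅ :=
        Set.eq_empty_iff_forall_notMem.2 (fun f hf => hEe hf.2.1)
      rw [this]
      simp
  have hbound_early : ∀ e : H.edgeSet, ¬ Late H I e →
      {f | confl H I e f ∧ ¬ Late H I f}.ncard ≤ 2 := by
    intro e hLe
    have hEe : IsExt H e := by
      by_contra h
      exact hLe (Or.inl h)
    have hallx : ∀ x ∈ (e : Sym2 W), ¬ InDia H x ∧ unitOf H x ∉ I := by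
      intro x hx
      constructor
      · exact fun h => hLe (Or.inr ⟨x, hx, Or.inl h⟩)
      · exact fun h => hLe (Or.inr ⟨x, hx, Or.inr h⟩)
    have hstrict : ∀ x ∈ (e : Sym2 W), Strict H I (unitOf H x) := by
      intro x hx
      exact ⟨⟨x, (hallx x hx).1, rfl⟩, (hallx x hx).2⟩
    have hBbound : ∀ (w : W), w ∈ (e : Sym2 W) →
        {f : H.edgeSet | IsExt H f ∧ f ≠ e ∧ (∃ y ∈ (f : Sym2 W), y ∈ unitOf H w) ∧
          ¬ Late H I f}.ncard ≤ 1 := by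
      intro w hw
      obtain ⟨g, yg, hgE, hgL, hygg, hygs⟩ := hlateedge (unitOf H w) (hstrict w hw)
      have hgne : g ≠ e := fun h => hLe (h ▸ hgL)
      exact bound_at_early C (hstrict w hw).1 hEe (mem_unitOf_self w) hw hgE hgne hygg
        hygs (Late H I) hgL
    have hsub : {f | confl H I e f ∧ ¬ Late H I f} ⊆
        {f : H.edgeSet | IsExt H f ∧ f ≠ e ∧ (∃ y ∈ (f : Sym2 W), y ∈ unitOf H (u₀ e)) ∧
          ¬ Late H I f} ∪
        {f : H.edgeSet | IsExt H f ∧ f ≠ e ∧ (∃ y ∈ (f : Sym2 W), y ∈ unitOf H (v₀ e)) ∧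
          ¬ Late H I f} := by
      rintro f ⟨⟨hnef, hIe', hIf, t, hSt, ⟨x, hxe, hxt⟩, ⟨y, hyf, hyt⟩⟩, hnL⟩
      have ht' : t = unitOf H x := triUnit_eq_at hSt.1 hxt
      rcases hmem_cases e x hxe with rfl | rfl
      · exact Or.inl ⟨hIf, fun h => hnef h.symm, ⟨y, hyf, ht' ▸ hyt⟩, hnL⟩
      · exact Or.inr ⟨hIf, fun h => hnef h.symm, ⟨y, hyf, ht' ▸ hyt⟩, hnL⟩
    have hle := le_trans (Set.ncard_le_ncard hsub (Set.toFinite _))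
      (Set.ncard_union_le _ _)
    have h1 := hBbound (u₀ e) (hmem_u e)
    have h2 := hBbound (v₀ e) (hmem_v e)
    omega
  -- the external coloring
  obtain ⟨φ, hφ⟩ := greedy_three (confl H I) hsymm hirr (Late H I) hbound_late hbound_early
  -- distinctness of external colors at strict triangles
  have hdistφ : ∀ s : Set W, TriUnit H s → s ∉ I → ∀ x y : W, x ∈ s → y ∈ s → x ≠ y →
      hasExt H x → hasExt H y → extC H φ x ≠ extC H φ y := by
    intro s hT hsI x y hxs hys hxy hEx hEy
    have hsx : s = unitOf H x := triUnit_eq_at hT hxs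
    have hy_in_x : y ∈ unitOf H x := hsx ▸ hys
    have hne_edges : extEdge H x hEx ≠ extEdge H y hEy := by
      intro h
      have hval : s(x, hEx.choose) = s(y, hEy.choose) := congrArg Subtype.val h
      rcases Sym2.eq_iff.1 hval with ⟨h1, -⟩ | ⟨-, h2⟩
      · exact hxy h1
      · exact hEx.choose_spec.2 (h2 ▸ hy_in_x)
    have hconf : confl H I (extEdge H x hEx) (extEdge H y hEy) := by
      refine ⟨hne_edges, ⟨x, hEx.choose, rfl, hEx.choose_spec.2⟩,
        ⟨y, hEy.choose, rfl, hEy.choose_spec.2⟩, s, ⟨hT, hsI⟩,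
        ⟨x, Sym2.mem_mk_left _ _, hxs⟩, ⟨y, Sym2.mem_mk_left _ _, hys⟩⟩
    have := hφ _ _ hconf
    unfold extC
    rw [dif_pos hEx, dif_pos hEy]
    exact this
  -- realizations
  have hreal : ∀ s : Set W, ∃ g : H.edgeSet → Fin 4,
      (TriUnit H s ∨ DiaUnit H s) → Spec H I φ s g := by
    intro s
    by_cases hT : TriUnit H s
    · obtain ⟨g, hg⟩ := realization_tri C I φ hT (hdistφ s hT)
      exact ⟨g, fun _ => hg⟩
    · by_cases hDm : DiaUnit H s
      · obtain ⟨g, hg⟩ := realization_dia C I φ hDm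
        exact ⟨g, fun _ => hg⟩
      · exact ⟨fun _ => 0, fun h => absurd h (by tauto)⟩
  choose F hF using hreal
  have hSpec : ∀ x : W, Spec H I φ (unitOf H x) (F (unitOf H x)) :=
    fun x => hF _ (hUnitKind x)
  -- the final coloring
  set c : H.edgeSet → Fin 4 := fun e =>
    if IsExt H e then (φ e).castSucc else F (unitOf H (u₀ e)) e with hc
  have hc_ext : ∀ e : H.edgeSet, IsExt H e → c e = (φ e).castSucc := by
    intro e h; rw [hc]; dsimp only; rw [if_pos h]
  have hc_int : ∀ e : H.edgeSet, ¬ IsExt H e → c e = F (unitOf H (u₀ e)) e := by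
    intro e h; rw [hc]; dsimp only; rw [if_neg h]
  -- same-colored edges never share a vertex
  have hNoShare : ∀ e f : H.edgeSet, e ≠ f → c e = c f →
      ∀ x : W, x ∈ (e : Sym2 W) → x ∈ (f : Sym2 W) → False := by
    have key : ∀ e f : H.edgeSet, c e = c f → IsExt H e → ¬ IsExt H f →
        ∀ x : W, x ∈ (e : Sym2 W) → x ∈ (f : Sym2 W) → False := by
      intro e f hcc hEe hEf x hxe hxf
      obtain ⟨y, hy1, hy2, hey⟩ := isExt_at hEe hxe
      have hhas : hasExt H x := ⟨y, hy1, hy2⟩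
      have hext_eq : extEdge H x hhas = e := by
        apply Subtype.ext
        show s(x, hhas.choose) = (e : Sym2 W)
        rw [hey, ext_unique C hhas.choose_spec.1 hy1 hhas.choose_spec.2 hy2]
      have hextC : extC H φ x = φ e := by
        unfold extC
        rw [dif_pos hhas, hext_eq]
      have hBf := hBoth f hEf
      have hxin : x ∈ unitOf H (u₀ f) := hBf x hxf
      refine (hSpec (u₀ f)).2.2.1 x hxin f hxf hBf hhas ?_
      rw [hextC, ← hc_ext e hEe, hcc, hc_int f hEf]
    intro e f hne hcc x hxe hxf
    by_cases hEe : IsExt H e <;> by_cases hEf : IsExt H f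
    · exact hne (ext_edge_eq C hEe hEf hxe hxf)
    · exact key e f hcc hEe hEf x hxe hxf
    · exact key f e hcc.symm hEf hEe x hxf hxe
    · have huex := hunit_x e hEe x hxe
      have hufx := hunit_x f hEf x hxf
      have hBe : BothIn H e (unitOf H x) := by rw [huex]; exact hBoth e hEe
      have hBf : BothIn H f (unitOf H x) := by rw [hufx]; exact hBoth f hEf
      refine (hSpec x).1 x (mem_unitOf_self x) e f hxe hxf hBe hBf hne ?_
      have h1 : c e = F (unitOf H x) e := by rw [hc_int e hEe, huex]
      have h2 : c f = F (unitOf H x) f := by rw [hc_int f hEf, hufx]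
      rw [← h1, ← h2, hcc]
  -- facts about color-3 edges
  have hS3 : ∀ e : H.edgeSet, c e = 3 → ¬ IsExt H e ∧ F (unitOf H (u₀ e)) e = 3 := by
    intro e h3
    by_cases hEe : IsExt H e
    · rw [hc_ext e hEe] at h3
      exact absurd h3 (castSucc_ne_three _)
    · exact ⟨hEe, by rw [← hc_int e hEe]; exact h3⟩
  have hSclass : ∀ e : H.edgeSet, c e = 3 →
      (TriUnit H (unitOf H (u₀ e)) ∧ unitOf H (u₀ e) ∈ I) ∨
      (DiaUnit H (unitOf H (u₀ e)) ∧
        ∀ x ∈ (e : Sym2 W), ∀ w, H.Adj x w → w ∈ unitOf H (u₀ e)) := by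
    intro e h3
    obtain ⟨hEe, hF3⟩ := hS3 e h3
    rcases hUnitKind (u₀ e) with hT | hD
    · left
      refine ⟨hT, ?_⟩
      by_contra hsI
      exact (hSpec (u₀ e)).2.2.2.2 hT hsI e (hBoth e hEe) hF3
    · right
      exact ⟨hD, (hSpec (u₀ e)).2.2.2.1 hD e (hBoth e hEe) hF3⟩
  have hSsame : ∀ e f : H.edgeSet, c e = 3 → c f = 3 →
      unitOf H (u₀ e) = unitOf H (u₀ f) → e = f := by
    intro e f h3e h3f hu
    obtain ⟨hEe, hFe⟩ := hS3 e h3e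
    obtain ⟨hEf, hFf⟩ := hS3 f h3f
    exact (hSpec (u₀ e)).2.1 e f (hBoth e hEe) (by rw [hu]; exact hBoth f hEf) hFe
      (by rw [hu]; exact hFf)
  have hnoadj : ∀ e f : H.edgeSet, c e = 3 → c f = 3 →
      unitOf H (u₀ e) ≠ unitOf H (u₀ f) →
      ∀ x y : W, H.Adj x y → x ∈ unitOf H (u₀ e) → y ∈ unitOf H (u₀ f) →
      (x ∈ (e : Sym2 W) ∨ y ∈ (f : Sym2 W)) → False := by
    intro e f h3e h3f hneU x y hadj' hx hy hend
    rcases hSclass e h3e with ⟨hTe, hIe⟩ | ⟨hDe, hMe⟩ <;>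
      rcases hSclass f h3f with ⟨hTf, hIf⟩ | ⟨hDf, hMf⟩
    · exact hIind _ hIe _ hIf hneU ⟨hneU, x, hx, y, hy, hadj'⟩
    · exact (hIP _ hIe).2 ⟨unitOf H (u₀ f), hDf, hneU, x, hx, y, hy, hadj'⟩
    · exact (hIP _ hIf).2 ⟨unitOf H (u₀ e), hDe, hneU.symm, y, hy, x, hx, hadj'.symm⟩
    · rcases hend with hxe | hyf
      · have hyE : y ∈ unitOf H (u₀ e) := hMe x hxe y hadj'
        exact hneU ((unit_eq_of_mem hyE).symm.trans (unit_eq_of_mem hy))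
      · have hxF : x ∈ unitOf H (u₀ f) := hMf y hyf x hadj'.symm
        exact hneU ((unit_eq_of_mem hx).symm.trans (unit_eq_of_mem hxF))
  have hedgeAt : ∀ (g : H.edgeSet) (x : W), x ∈ (g : Sym2 W) →
      (¬ IsExt H g ∧ BothIn H g (unitOf H x)) ∨
      (∃ y, H.Adj x y ∧ (g : Sym2 W) = s(x, y) ∧ y ∉ unitOf H x) := by
    intro g x hx
    by_cases hEg : IsExt H g
    · obtain ⟨y, h1, h2, h3⟩ := isExt_at hEg hx
      exact Or.inr ⟨y, h1, h3, h2⟩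
    · refine Or.inl ⟨hEg, ?_⟩
      rw [hunit_x g hEg x hx]
      exact hBoth g hEg
  -- no short walks between two color-3 edges
  have hlen2 : ∀ e f g : H.edgeSet, c e = 3 → c f = 3 → e ≠ f →
      H.lineGraph.Adj e g → H.lineGraph.Adj g f → False := by
    intro e f g h3e h3f hnef hA1 hA2
    obtain ⟨-, x, hxe, hxg⟩ := (SimpleGraph.lineGraph_adj_iff_exists).1 hA1
    obtain ⟨-, y, hyg, hyf⟩ := (SimpleGraph.lineGraph_adj_iff_exists).1 hA2
    have hUne : unitOf H (u₀ e) ≠ unitOf H (u₀ f) := fun h => hnef (hSsame e f h3e h3f h)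
    have hxE : x ∈ unitOf H (u₀ e) := hBoth e (hS3 e h3e).1 x hxe
    have hyF : y ∈ unitOf H (u₀ f) := hBoth f (hS3 f h3f).1 y hyf
    rcases hedgeAt g x hxg with ⟨hgi, hgB⟩ | ⟨z, hz1, hz2, hz3⟩
    · have hyx : y ∈ unitOf H x := hgB y hyg
      have h1 : unitOf H x = unitOf H (u₀ e) := unit_eq_of_mem hxE
      exact hUne ((unit_eq_of_mem (h1 ▸ hyx)).symm.trans (unit_eq_of_mem hyF))
    · have hyg' : y = x ∨ y = z := by rw [hz2, Sym2.mem_iff] at hyg; exact hyg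
      rcases hyg' with rfl | rfl
      · exact hUne ((unit_eq_of_mem hxE).symm.trans (unit_eq_of_mem hyF))
      · exact hnoadj e f h3e h3f hUne x y hz1 hxE hyF (Or.inl hxe)
  have hlen3 : ∀ e f g h' : H.edgeSet, c e = 3 → c f = 3 → e ≠ f →
      H.lineGraph.Adj e g → H.lineGraph.Adj g h' → H.lineGraph.Adj h' f → False := by
    intro e f g h' h3e h3f hnef hA1 hA2 hA3
    obtain ⟨-, x, hxe, hxg⟩ := (SimpleGraph.lineGraph_adj_iff_exists).1 hA1
    obtain ⟨-, z, hzg, hzh⟩ := (SimpleGraph.lineGraph_adj_iff_exists).1 hA2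
    obtain ⟨-, y, hyh, hyf⟩ := (SimpleGraph.lineGraph_adj_iff_exists).1 hA3
    have hUne : unitOf H (u₀ e) ≠ unitOf H (u₀ f) := fun h => hnef (hSsame e f h3e h3f h)
    have hxE : x ∈ unitOf H (u₀ e) := hBoth e (hS3 e h3e).1 x hxe
    have hyF : y ∈ unitOf H (u₀ f) := hBoth f (hS3 f h3f).1 y hyf
    rcases hedgeAt g x hxg with ⟨hgi, hgB⟩ | ⟨w1, hw1, hgw, hw1n⟩ <;>
      rcases hedgeAt h' y hyh with ⟨hhi, hhB⟩ | ⟨w2, hw2, hhw, hw2n⟩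
    · have hzE : z ∈ unitOf H (u₀ e) := (unit_eq_of_mem hxE) ▸ hgB z hzg
      have hzF : z ∈ unitOf H (u₀ f) := (unit_eq_of_mem hyF) ▸ hhB z hzh
      exact hUne ((unit_eq_of_mem hzE).symm.trans (unit_eq_of_mem hzF))
    · have hz' : z = y ∨ z = w2 := by rw [hhw, Sym2.mem_iff] at hzh; exact hzh
      have hzE : z ∈ unitOf H (u₀ e) := (unit_eq_of_mem hxE) ▸ hgB z hzg
      rcases hz' with rfl | rfl
      · exact hUne ((unit_eq_of_mem hzE).symm.trans (unit_eq_of_mem hyF))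
      · exact hnoadj e f h3e h3f hUne z y hw2.symm hzE hyF (Or.inr hyf)
    · have hz' : z = x ∨ z = w1 := by rw [hgw, Sym2.mem_iff] at hzg; exact hzg
      have hzF : z ∈ unitOf H (u₀ f) := (unit_eq_of_mem hyF) ▸ hhB z hzh
      rcases hz' with rfl | rfl
      · exact hUne ((unit_eq_of_mem hxE).symm.trans (unit_eq_of_mem hzF))
      · exact hnoadj e f h3e h3f hUne x z hw1 hxE hzF (Or.inl hxe)
    · have hgh : g = h' := ext_edge_eq C ⟨x, w1, hgw, hw1n⟩ ⟨y, w2, hhw, hw2n⟩ hzg hzh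
      subst hgh
      have hy' : y = x ∨ y = w1 := by rw [hgw, Sym2.mem_iff] at hyh; exact hyh
      rcases hy' with rfl | rfl
      · exact hUne ((unit_eq_of_mem hxE).symm.trans (unit_eq_of_mem hyF))
      · exact hnoadj e f h3e h3f hUne x y hw1 hxE hyF (Or.inl hxe)
  -- conclusion
  refine ⟨c, ?_⟩
  intro e f hne hcc p
  by_cases h3 : c e = 3
  · have h3f : c f = 3 := hcc.symm.trans h3
    have hvec : ![1, 1, 1, 3] (c e) = 3 := by rw [h3]; decide
    rw [hvec]
    cases p with
    | nil => exact absurd rfl hne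
    | cons hA1 p1 =>
      cases p1 with
      | nil =>
        exfalso
        obtain ⟨-, x, hxe, hxf⟩ := (SimpleGraph.lineGraph_adj_iff_exists).1 hA1
        exact hNoShare e f hne hcc x hxe hxf
      | cons hA2 p2 =>
        cases p2 with
        | nil => exact absurd (hlen2 e f _ h3 h3f hne hA1 hA2) not_false
        | cons hA3 p3 =>
          cases p3 with
          | nil => exact absurd (hlen3 e f _ _ h3 h3f hne hA1 hA2 hA3) not_false
          | cons hA4 p4 =>
            simp only [SimpleGraph.Walk.length_cons]
            omega
  · have hvec : ![1, 1, 1, 3] (c e) = 1 := vec_ne_three (c e) h3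
    rw [hvec]
    cases p with
    | nil => exact absurd rfl hne
    | cons hA1 p1 =>
      cases p1 with
      | nil =>
        exfalso
        obtain ⟨-, x, hxe, hxf⟩ := (SimpleGraph.lineGraph_adj_iff_exists).1 hA1
        exact hNoShare e f hne hcc x hxe hxf
      | cons hA2 p2 =>
        simp only [SimpleGraph.Walk.length_cons]
        omega

end Main

end PK
/-- With `Gᵢ` as in the bridge-component set-up (2-edge-connected, maximum degree 3,
at least 5 vertices), `Gᵢ` admits a (1,1,1,3)-packing edge-coloring. -/
theorem bridge_component_packing_edge_colorable {V : Type*} [Fintype V]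
    (G : SimpleGraph V) (hconn : G.Connected) (hclaw : G.ClawFree) (hcubic : G.IsCubic)
    (hbridge : ∃ e : Sym2 V, G.IsBridge e)
    (K : (G.deleteEdges {e | G.IsBridge e}).ConnectedComponent)
    (h2ec : (G.induce K.supp).TwoEdgeConnected)
    (hmaxdeg : (∀ v, ((G.induce K.supp).neighborSet v).ncard ≤ 3) ∧
      ∃ v, ((G.induce K.supp).neighborSet v).ncard = 3)
    (hcard : 5 ≤ Nat.card K.supp) :
    ∃ c : (G.induce K.supp).edgeSet → Fin 4,
      (G.induce K.supp).IsPackingEdgeColoring ![1, 1, 1, 3] c := by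
  classical
  haveI : Fintype ↥K.supp := Fintype.ofFinite _
  set H : SimpleGraph ↥K.supp := G.induce K.supp with hH
  obtain ⟨hconn', hNontriv, hnob⟩ := h2ec
  haveI := hNontriv
  have hadj_iff : ∀ x y : ↥K.supp, H.Adj x y ↔ G.Adj ↑x ↑y := fun x y => Iff.rfl
  have hdeg : ∀ v : ↥K.supp, (H.neighborSet v).ncard ≤ 3 := hmaxdeg.1
  -- every vertex of H has two distinct neighbours
  have htwo : ∀ v : ↥K.supp, ∃ a b : ↥K.supp, a ≠ b ∧ H.Adj v a ∧ H.Adj v b := by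
    intro v
    obtain ⟨u, hu⟩ := exists_ne v
    obtain ⟨p⟩ := hconn'.preconnected v u
    have h1 : ∃ a, H.Adj v a := by
      cases p with
      | nil => exact absurd rfl hu
      | cons hA q => exact ⟨_, hA⟩
    obtain ⟨a, ha⟩ := h1
    by_contra hcon
    push_neg at hcon
    have hall : ∀ w, H.Adj v w → w = a := by
      intro w hw
      by_contra hne
      exact hcon w a hne hw ha
    apply hnob s(v, a)
    rw [SimpleGraph.isBridge_iff]
    rintro ⟨q⟩
    cases q with
    | nil => exact ha.ne rfl
    | cons hA q' =>
      change (H \ SimpleGraph.fromEdgeSet {s(v, a)}).Adj v _ at hA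
      rw [SimpleGraph.sdiff_adj] at hA
      have hw := hall _ hA.1
      apply hA.2
      rw [SimpleGraph.fromEdgeSet_adj]
      constructor
      · rw [hw]; rfl
      · rw [hw]; exact ha.ne
  -- every vertex of H is in a triangle
  have htri : ∀ v : ↥K.supp, ∃ a b, H.Adj v a ∧ H.Adj v b ∧ H.Adj a b := by
    intro v
    obtain ⟨a, b, hab, hva, hvb⟩ := htwo v
    by_cases hGab : G.Adj ↑a ↑b
    · exact ⟨a, b, hva, hvb, (hadj_iff a b).2 hGab⟩
    · have hGva : G.Adj ↑v ↑a := (hadj_iff v a).1 hva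
      have hGvb : G.Adj ↑v ↑b := (hadj_iff v b).1 hvb
      have h3 : ∃ u, G.Adj ↑v u ∧ u ≠ ↑a ∧ u ≠ ↑b := by
        by_contra hcon
        push_neg at hcon
        have hsub : G.neighborSet ↑v ⊆ {↑a, ↑b} := by
          intro x hx
          by_cases hxa : x = ↑a
          · exact Or.inl hxa
          · exact Or.inr (hcon x hx hxa)
        have hle := Set.ncard_le_ncard hsub (Set.toFinite _)
        have h2 : ({(↑a : V), ↑b} : Set V).ncard ≤ 2 :=
          le_trans (Set.ncard_insert_le _ _) (by rw [Set.ncard_singleton])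
        rw [hcubic ↑v] at hle
        omega
      obtain ⟨u, hGvu, hua, hub⟩ := h3
      have habV : (↑a : V) ≠ ↑b := fun h => hab (Subtype.coe_injective h)
      by_cases huK : u ∈ K.supp
      · have hor : G.Adj ↑a u ∨ G.Adj ↑b u := by
          by_contra hno
          push_neg at hno
          exact hclaw ⟨↑v, ↑a, ↑b, u, hGva, hGvb, hGvu, habV, fun h => hua h.symm,
            fun h => hub h.symm, hGab, hno.1, hno.2⟩
        rcases hor with hau | hbu
        · exact ⟨a, ⟨u, huK⟩, hva, (hadj_iff v ⟨u, huK⟩).2 hGvu, (hadj_iff a ⟨u, huK⟩).2 hau⟩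
        · exact ⟨b, ⟨u, huK⟩, hvb, (hadj_iff v ⟨u, huK⟩).2 hGvu, (hadj_iff b ⟨u, huK⟩).2 hbu⟩
      · -- the edge from v to u is a bridge of G
        have hbr : G.IsBridge s(↑v, u) := by
          by_contra hnbr
          have hdel : (G.deleteEdges {e | G.IsBridge e}).Adj ↑v u := by
            rw [SimpleGraph.deleteEdges_adj]
            exact ⟨hGvu, hnbr⟩
          have hmk : (G.deleteEdges {e | G.IsBridge e}).connectedComponentMk u = K := by
            rw [← (v : ↥K.supp).2]
            exact (SimpleGraph.ConnectedComponent.connectedComponentMk_eq_of_adj hdel).symm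
          exact huK hmk
        have hnau : ¬ G.Adj ↑a u := by
          intro hau
          rw [SimpleGraph.isBridge_iff] at hbr
          apply hbr
          have e1 : (G \ SimpleGraph.fromEdgeSet {s(↑v, u)}).Adj ↑v ↑a := by
            rw [SimpleGraph.sdiff_adj]
            refine ⟨hGva, ?_⟩
            rw [SimpleGraph.fromEdgeSet_adj]
            rintro ⟨hmem, -⟩
            simp only [Set.mem_singleton_iff] at hmem
            rcases Sym2.eq_iff.1 hmem with ⟨-, h⟩ | ⟨h1, -⟩
            · exact hua h.symm
            · exact huK (h1 ▸ (v : ↥K.supp).2)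
          have e2 : (G \ SimpleGraph.fromEdgeSet {s(↑v, u)}).Adj ↑a u := by
            rw [SimpleGraph.sdiff_adj]
            refine ⟨hau, ?_⟩
            rw [SimpleGraph.fromEdgeSet_adj]
            rintro ⟨hmem, -⟩
            simp only [Set.mem_singleton_iff] at hmem
            rcases Sym2.eq_iff.1 hmem with ⟨h, -⟩ | ⟨h, -⟩
            · exact hGva.ne h.symm
            · exact hua h.symm
          exact (e1.reachable).trans e2.reachable
        have hnbu : ¬ G.Adj ↑b u := by
          intro hbu
          rw [SimpleGraph.isBridge_iff] at hbr
          apply hbr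
          have e1 : (G \ SimpleGraph.fromEdgeSet {s(↑v, u)}).Adj ↑v ↑b := by
            rw [SimpleGraph.sdiff_adj]
            refine ⟨hGvb, ?_⟩
            rw [SimpleGraph.fromEdgeSet_adj]
            rintro ⟨hmem, -⟩
            simp only [Set.mem_singleton_iff] at hmem
            rcases Sym2.eq_iff.1 hmem with ⟨-, h⟩ | ⟨h1, -⟩
            · exact hub h.symm
            · exact huK (h1 ▸ (v : ↥K.supp).2)
          have e2 : (G \ SimpleGraph.fromEdgeSet {s(↑v, u)}).Adj ↑b u := by
            rw [SimpleGraph.sdiff_adj]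
            refine ⟨hbu, ?_⟩
            rw [SimpleGraph.fromEdgeSet_adj]
            rintro ⟨hmem, -⟩
            simp only [Set.mem_singleton_iff] at hmem
            rcases Sym2.eq_iff.1 hmem with ⟨h, -⟩ | ⟨h, -⟩
            · exact hGvb.ne h.symm
            · exact hub h.symm
          exact (e1.reachable).trans e2.reachable
        exact absurd ⟨↑v, ↑a, ↑b, u, hGva, hGvb, hGvu, habV, fun h => hua h.symm,
          fun h => hub h.symm, hGab, hnau, hnbu⟩ hclaw
  -- no K₄ in H
  have hK4 : ∀ a b c d : ↥K.supp, H.Adj a b → H.Adj a c → H.Adj a d → H.Adj b c →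
      H.Adj b d → H.Adj c d → False := by
    intro a b c d hab hac had hbc hbd hcd
    have hclosed : ∀ x : ↥K.supp, x ∈ ({a, b, c, d} : Set ↥K.supp) →
        ∀ y, H.Adj x y → y ∈ ({a, b, c, d} : Set ↥K.supp) := by
      intro x hx y hy
      by_contra hyn
      simp only [Set.mem_insert_iff, Set.mem_singleton_iff] at hyn
      push_neg at hyn
      obtain ⟨hya, hyb, hyc, hyd⟩ := hyn
      rcases hx with rfl | rfl | rfl | rfl
      · exact PK.not_four hdeg hbc.ne hbd.ne (fun h => hyb h.symm) hcd.ne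
          (fun h => hyc h.symm) (fun h => hyd h.symm) hab hac had hy
      · exact PK.not_four hdeg hac.ne had.ne (fun h => hya h.symm) hcd.ne
          (fun h => hyc h.symm) (fun h => hyd h.symm) hab.symm hbc hbd hy
      · exact PK.not_four hdeg hab.ne had.ne (fun h => hya h.symm) hbd.ne
          (fun h => hyb h.symm) (fun h => hyd h.symm) hac.symm hbc.symm hcd hy
      · exact PK.not_four hdeg hab.ne hac.ne (fun h => hya h.symm) hbc.ne
          (fun h => hyb h.symm) (fun h => hyc h.symm) had.symm hbd.symm hcd.symm hy
    have hout : ∃ w : ↥K.supp, w ∉ ({a, b, c, d} : Set ↥K.supp) := by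
      by_contra hcon
      push_neg at hcon
      have hsub : (Set.univ : Set ↥K.supp) ⊆ {a, b, c, d} := fun w _ => hcon w
      have h4 : ({a, b, c, d} : Set ↥K.supp).ncard ≤ 4 :=
        le_trans (Set.ncard_insert_le _ _) (by
          have h3 : ({b, c, d} : Set ↥K.supp).ncard ≤ 3 :=
            le_trans (Set.ncard_insert_le _ _) (by
              have h2 : ({c, d} : Set ↥K.supp).ncard ≤ 2 :=
                le_trans (Set.ncard_insert_le _ _) (by rw [Set.ncard_singleton])
              omega)
          omega)
      have hle := Set.ncard_le_ncard hsub (Set.toFinite _)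
      rw [Set.ncard_univ] at hle
      omega
    obtain ⟨w, hw⟩ := hout
    obtain ⟨p⟩ := hconn'.preconnected a w
    have hwalk : ∀ (x y : ↥K.supp) (p : H.Walk x y), x ∈ ({a, b, c, d} : Set ↥K.supp) →
        y ∈ ({a, b, c, d} : Set ↥K.supp) := by
      intro x y p
      induction p with
      | nil => exact id
      | cons hA q ih => exact fun hx => ih (hclosed _ hx _ hA)
    exact hw (hwalk a w p (by simp))
  exact PK.main H ⟨hdeg, htri, hK4⟩
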